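/- arXiv:1708.03363 — 8 statements merged into one kernel-verified Lean document; each statement's English description precedes it below -/
import Mathlib

section
/- Let $(\Omega,\Sigma,\mu)$ and $(\Omega',\Sigma',\nu)$ be measure spaces, $0 < u, v \le \infty$ and $0 < p < q < \infty$. If a bounded linear operator $T : L^u(\mu) \to L^v(\nu)$ is $(p,q)$-regular with some constant $K > 0$, then $T = 0$. -/
/-! Testing regularity on `n` copies of a single `f` gives
`n ^ (1/p) ‖T f‖ ≤ K n ^ (1/q) ‖f‖` for every `n`. Since `1/q < 1/p`, letting `n → ∞`
forces `‖T f‖ = 0`. -/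

open MeasureTheory ENNReal

/-- `T` is `(p,q)`-regular with constant `K`. -/
def IsPQRegular {Ω Ω' : Type*} [MeasurableSpace Ω] [MeasurableSpace Ω']
    {μ : Measure Ω} {ν : Measure Ω'} {u v : ℝ≥0∞}
    (T : Lp ℝ u μ → Lp ℝ v ν) (p q K : ℝ) : Prop :=
  ∀ (n : ℕ) (f : Fin n → Lp ℝ u μ),
    eLpNorm (fun ω' => (∑ i, |T (f i) ω'| ^ p) ^ (1 / p)) v ν ≤
      ENNReal.ofReal K * eLpNorm (fun ω => (∑ i, |f i ω| ^ q) ^ (1 / q)) u μ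

open Filter Topology

lemma ENNReal.eq_zero_of_forall_rpow_mul_le {a c : ℝ≥0∞} (hc : c ≠ ∞) {p q : ℝ}
    (hp : 0 < p) (hpq : p < q)
    (h : ∀ n : ℕ, (n : ℝ≥0∞) ^ (1 / p) * a ≤ (n : ℝ≥0∞) ^ (1 / q) * c) : a = 0 := by
  have hr : 0 < 1 / p - 1 / q := sub_pos.2 (one_div_lt_one_div_of_lt hp hpq)
  have hbound : ∀ n : ℕ, 1 ≤ n → (n : ℝ≥0∞) ^ (1 / p - 1 / q) * a ≤ c := by
    intro n hn
    have hn0 : (n : ℝ≥0∞) ≠ 0 := by exact_mod_cast (Nat.one_le_iff_ne_zero.1 hn)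
    have hpos : (n : ℝ≥0∞) ^ (1 / q) ≠ 0 :=
      (rpow_pos (pos_iff_ne_zero.2 hn0) (natCast_ne_top n)).ne'
    have hfin : (n : ℝ≥0∞) ^ (1 / q) ≠ ∞ :=
      rpow_ne_top_of_nonneg (one_div_pos.2 (hp.trans hpq)).le (natCast_ne_top n)
    rw [← ENNReal.mul_le_mul_iff_right hpos hfin, ← mul_assoc,
      ← rpow_add _ _ hn0 (natCast_ne_top n), add_sub_cancel]
    exact h n
  by_contra ha
  have hgrow : Tendsto (fun n : ℕ => (n : ℝ≥0∞) ^ (1 / p - 1 / q) * a) atTop (𝓝 ∞) := by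
    simpa only [top_mul ha, Function.comp_def] using ENNReal.Tendsto.mul_const (b := a)
      ((ENNReal.tendsto_rpow_at_top hr).comp tendsto_nat_nhds_top) (Or.inl top_ne_zero)
  obtain ⟨n, hn, hlt⟩ :=
    ((eventually_ge_atTop 1).and (hgrow.eventually (lt_mem_nhds hc.lt_top))).exists
  exact (hbound n hn).not_gt hlt

lemma eLpNorm_rpow_sum_const_rpow {α : Type*} [MeasurableSpace α] {w : ℝ≥0∞} {m : Measure α}
    (g : α → ℝ) {r : ℝ} (hr : 0 < r) (n : ℕ) :
    eLpNorm (fun x => (∑ _i : Fin n, |g x| ^ r) ^ (1 / r)) w m =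
      (n : ℝ≥0∞) ^ (1 / r) * eLpNorm g w m := by
  have hsmul : (fun x => (∑ _i : Fin n, |g x| ^ r) ^ (1 / r)) =
      ((n : ℝ) ^ (1 / r)) • (fun x => ‖g x‖) := by
    funext x
    simp only [Finset.sum_const, Finset.card_univ, Fintype.card_fin, nsmul_eq_mul,
      Pi.smul_apply, smul_eq_mul, Real.norm_eq_abs]
    rw [Real.mul_rpow (by positivity) (by positivity), ← Real.rpow_mul (abs_nonneg _),
      mul_one_div_cancel hr.ne', Real.rpow_one]
  rw [hsmul, eLpNorm_const_smul, eLpNorm_norm g, Real.enorm_eq_ofReal (by positivity),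
    ← ofReal_rpow_of_nonneg (Nat.cast_nonneg n) (by positivity), ofReal_natCast]

lemma IsPQRegular.rpow_mul_eLpNorm_le {Ω Ω' : Type*} [MeasurableSpace Ω] [MeasurableSpace Ω']
    {μ : Measure Ω} {ν : Measure Ω'} {u v : ℝ≥0∞} {T : Lp ℝ u μ → Lp ℝ v ν} {p q K : ℝ}
    (hT : IsPQRegular T p q K) (hp : 0 < p) (hq : 0 < q) (f : Lp ℝ u μ) (n : ℕ) :
    (n : ℝ≥0∞) ^ (1 / p) * eLpNorm (T f) v ν ≤
      (n : ℝ≥0∞) ^ (1 / q) * (ENNReal.ofReal K * eLpNorm f u μ) := by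
  have h := hT n fun _ => f
  rwa [eLpNorm_rpow_sum_const_rpow _ hp, eLpNorm_rpow_sum_const_rpow _ hq,
    mul_left_comm] at h

theorem stmt3_general {Ω Ω' : Type*} [MeasurableSpace Ω] [MeasurableSpace Ω']
    (μ : Measure Ω) (ν : Measure Ω') {u v : ℝ≥0∞} (hv : 0 < v)
    {p q : ℝ} (hp : 0 < p) (hpq : p < q)
    {K : ℝ} (T : Lp ℝ u μ →ₗ[ℝ] Lp ℝ v ν)
    (hT : IsPQRegular (⇑T) p q K) :
    T = 0 := by
  ext1 f
  have hTf : eLpNorm (T f) v ν = 0 :=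
    ENNReal.eq_zero_of_forall_rpow_mul_le (mul_ne_top ofReal_ne_top (Lp.eLpNorm_ne_top f))
      hp hpq (hT.rpow_mul_eLpNorm_le hp (hp.trans hpq) f)
  rw [LinearMap.zero_apply, Lp.eq_zero_iff_ae_eq_zero]
  exact (eLpNorm_eq_zero_iff (Lp.aestronglyMeasurable _) hv.ne').1 hTf

/-- If `0 < p < q < ∞` and `T : L^u(μ) → L^v(ν)` is `(p,q)`-regular with some
constant `K > 0`, then `T = 0`. -/
theorem stmt3 {Ω Ω' : Type*} [MeasurableSpace Ω] [MeasurableSpace Ω']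
    (μ : Measure Ω) (ν : Measure Ω') {u v : ℝ≥0∞} (hu : 0 < u) (hv : 0 < v)
    {p q : ℝ} (hp : 0 < p) (hpq : p < q)
    {K : ℝ} (hK : 0 < K) (T : Lp ℝ u μ →ₗ[ℝ] Lp ℝ v ν)
    (hT : IsPQRegular (⇑T) p q K) :
    T = 0 :=
  stmt3_general μ ν hv hp hpq T hT
end

section
/- Let $(\Omega,\Sigma,\mu)$ and $(\Omega',\Sigma',\nu)$ be measure spaces, $1 \le u, v \le \infty$ and $1 \le q \le p < \infty$. For a $(p,q)$-regular operator $T$ let $\rho_{p,q}(T)$ denote the infimum of all constants $K$ for which $T$ is $(p,q)$-regular with constant $K$. Then the space of $(p,q)$-regular operators from $L^u(\mu)$ to $L^v(\nu)$ is complete with respect to $\rho_{p,q}$: if $(T_n)$ is a sequence of $(p,q)$-regular operators with $\rho_{p,q}(T_n - T_m) \to 0$ as $n,m \to \infty$, then there exists a $(p,q)$-regular operator $T$ with $\rho_{p,q}(T_n - T) \to 0$. -/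
open MeasureTheory ENNReal Filter Topology

theorem Real.rpow_sum_abs_rpow_le_sum_abs {ι : Type*} (s : Finset ι) (a : ι → ℝ) {p : ℝ}
    (hp : 1 ≤ p) : (∑ i ∈ s, |a i| ^ p) ^ (1 / p) ≤ ∑ i ∈ s, |a i| := by
  have hp₀ : 0 < p := zero_lt_one.trans_le hp
  calc (∑ i ∈ s, |a i| ^ p) ^ (1 / p)
      ≤ ∑ i ∈ s, (|a i| ^ p) ^ (1 / p) :=
        Finset.le_sum_of_subadditive_on_pred (· ^ (1 / p)) (0 ≤ ·)
          (by simp [hp₀.ne'])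
          (fun x y hx hy => Real.rpow_add_le_add_rpow hx hy (by positivity)
            (div_le_one_of_le₀ hp hp₀.le))
          (fun _ _ => add_nonneg) _ (fun i _ => by positivity)
    _ = ∑ i ∈ s, |a i| := by
        simp only [← Real.rpow_mul (abs_nonneg _), mul_one_div_cancel hp₀.ne', Real.rpow_one]

section PointwiseLpNorm

variable {α ι : Type*} [Fintype ι] {p : ℝ}

noncomputable def pointwiseLpNorm (p : ℝ) (g : ι → α → ℝ) : α → ℝ :=
  fun ω => (∑ i, |g i ω| ^ p) ^ (1 / p)

theorem pointwiseLpNorm_nonneg (g : ι → α → ℝ) (ω : α) : 0 ≤ pointwiseLpNorm p g ω := by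
  unfold pointwiseLpNorm
  positivity

theorem pointwiseLpNorm_fin_one (hp : p ≠ 0) (g : Fin 1 → α → ℝ) :
    pointwiseLpNorm p g = fun ω => |g 0 ω| := by
  funext ω
  simp only [pointwiseLpNorm, Fin.sum_univ_one]
  rw [← Real.rpow_mul (abs_nonneg _), mul_one_div_cancel hp, Real.rpow_one]

variable [MeasurableSpace α] {ν : Measure α}

theorem pointwiseLpNorm_congr_ae {g h : ι → α → ℝ} (hgh : ∀ i, g i =ᵐ[ν] h i) :
    pointwiseLpNorm p g =ᵐ[ν] pointwiseLpNorm p h := by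
  filter_upwards [ae_all_iff.2 hgh] with ω hω
  simp only [pointwiseLpNorm, hω]

theorem aestronglyMeasurable_pointwiseLpNorm {g : ι → α → ℝ}
    (hg : ∀ i, AEStronglyMeasurable (g i) ν) :
    AEStronglyMeasurable (pointwiseLpNorm p g) ν := by
  have hg' : ∀ i, AEMeasurable (g i) ν := fun i => (hg i).aemeasurable
  exact (show AEMeasurable (pointwiseLpNorm p g) ν by
    unfold pointwiseLpNorm; fun_prop).aestronglyMeasurable

variable {v : ℝ≥0∞}

theorem eLpNorm_pointwiseLpNorm_add_le (hv : 1 ≤ v) (hp : 1 ≤ p) {g h : ι → α → ℝ}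
    (hg : ∀ i, AEStronglyMeasurable (g i) ν) (hh : ∀ i, AEStronglyMeasurable (h i) ν) :
    eLpNorm (pointwiseLpNorm p (g + h)) v ν ≤
      eLpNorm (pointwiseLpNorm p g) v ν + eLpNorm (pointwiseLpNorm p h) v ν := by
  refine (eLpNorm_mono_real fun ω => ?_).trans <| eLpNorm_add_le
    (aestronglyMeasurable_pointwiseLpNorm hg) (aestronglyMeasurable_pointwiseLpNorm hh) hv
  rw [Real.norm_of_nonneg (pointwiseLpNorm_nonneg _ ω)]
  exact Real.Lp_add_le Finset.univ (fun i => g i ω) (fun i => h i ω) hp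

theorem eLpNorm_pointwiseLpNorm_le_sum (hv : 1 ≤ v) (hp : 1 ≤ p) {g : ι → α → ℝ}
    (hg : ∀ i, AEStronglyMeasurable (g i) ν) :
    eLpNorm (pointwiseLpNorm p g) v ν ≤ ∑ i, eLpNorm (g i) v ν := by
  calc eLpNorm (pointwiseLpNorm p g) v ν ≤ eLpNorm (∑ i, fun ω => |g i ω|) v ν :=
        eLpNorm_mono_real fun ω => by
          rw [Real.norm_of_nonneg (pointwiseLpNorm_nonneg _ ω), Finset.sum_apply]
          exact Real.rpow_sum_abs_rpow_le_sum_abs Finset.univ (g · ω) hp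
    _ ≤ ∑ i, eLpNorm (fun ω => |g i ω|) v ν :=
        eLpNorm_sum_le (fun i _ => (hg i).norm) hv
    _ = ∑ i, eLpNorm (g i) v ν := by
        simp only [← Real.norm_eq_abs, eLpNorm_norm]

end PointwiseLpNorm

section LpOperators

variable {Ω Ω' ι : Type*} [MeasurableSpace Ω] [MeasurableSpace Ω'] [Fintype ι]
  {μ : Measure Ω} {ν : Measure Ω'} {u v : ℝ≥0∞} {p q K : ℝ}

theorem eLpNorm_pointwiseLpNorm_map_add_le [Fact (1 ≤ v)] (hp : 1 ≤ p)
    (T₁ T₂ : Lp ℝ u μ → Lp ℝ v ν) (f : ι → Lp ℝ u μ) :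
    eLpNorm (pointwiseLpNorm p fun i => ⇑((T₁ + T₂) (f i))) v ν ≤
      eLpNorm (pointwiseLpNorm p fun i => ⇑(T₁ (f i))) v ν +
        eLpNorm (pointwiseLpNorm p fun i => ⇑(T₂ (f i))) v ν := by
  refine (eLpNorm_congr_ae (pointwiseLpNorm_congr_ae fun i =>
    Lp.coeFn_add (T₁ (f i)) (T₂ (f i)))).trans_le ?_
  exact eLpNorm_pointwiseLpNorm_add_le Fact.out hp (fun i => Lp.aestronglyMeasurable _)
    (fun i => Lp.aestronglyMeasurable _)

theorem eLpNorm_pointwiseLpNorm_apply_le [Fact (1 ≤ u)] [Fact (1 ≤ v)] (hp : 1 ≤ p)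
    (A : Lp ℝ u μ →L[ℝ] Lp ℝ v ν) (f : ι → Lp ℝ u μ) :
    eLpNorm (pointwiseLpNorm p fun i => ⇑(A (f i))) v ν ≤ ENNReal.ofReal (‖A‖ * ∑ i, ‖f i‖) :=
  calc eLpNorm (pointwiseLpNorm p fun i => ⇑(A (f i))) v ν
      ≤ ∑ i, eLpNorm (A (f i)) v ν :=
        eLpNorm_pointwiseLpNorm_le_sum Fact.out hp fun i => Lp.aestronglyMeasurable _
    _ = ∑ i, ENNReal.ofReal ‖A (f i)‖ := by simp only [← Lp.enorm_def, ofReal_norm]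
    _ ≤ ∑ i, ENNReal.ofReal (‖A‖ * ‖f i‖) :=
        Finset.sum_le_sum fun i _ => ofReal_le_ofReal (A.le_opNorm _)
    _ = ENNReal.ofReal (‖A‖ * ∑ i, ‖f i‖) := by
        rw [Finset.mul_sum, ofReal_sum_of_nonneg fun i _ => by positivity]

namespace IsPQRegular

theorem add [Fact (1 ≤ v)] (hp : 1 ≤ p) {T₁ T₂ : Lp ℝ u μ → Lp ℝ v ν} {K₁ K₂ : ℝ}
    (h₁ : IsPQRegular T₁ p q K₁) (h₂ : IsPQRegular T₂ p q K₂) (hK₁ : 0 ≤ K₁) (hK₂ : 0 ≤ K₂) :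
    IsPQRegular (T₁ + T₂) p q (K₁ + K₂) := fun n f =>
  calc _ ≤ _ + _ := eLpNorm_pointwiseLpNorm_map_add_le hp T₁ T₂ f
    _ ≤ _ := add_le_add (h₁ n f) (h₂ n f)
    _ = _ := by rw [ofReal_add hK₁ hK₂, add_mul]

theorem norm_apply_le {T : Lp ℝ u μ → Lp ℝ v ν} (hT : IsPQRegular T p q K) (hp : p ≠ 0)
    (hq : q ≠ 0) (hK : 0 ≤ K) (g : Lp ℝ u μ) : ‖T g‖ ≤ K * ‖g‖ := by
  have h : eLpNorm (pointwiseLpNorm p fun i => ⇑(T (![g] i))) v ν ≤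
      ENNReal.ofReal K * eLpNorm (pointwiseLpNorm q fun i => ⇑(![g] i)) u μ := hT 1 ![g]
  simp only [pointwiseLpNorm_fin_one hp, pointwiseLpNorm_fin_one hq, Matrix.cons_val_zero,
    ← Real.norm_eq_abs, eLpNorm_norm] at h
  rw [Lp.norm_def, Lp.norm_def, ← toReal_ofReal hK, ← toReal_mul]
  exact toReal_mono (mul_ne_top ofReal_ne_top (Lp.eLpNorm_ne_top g)) h

theorem opNorm_le [Fact (1 ≤ u)] [Fact (1 ≤ v)] {A : Lp ℝ u μ →L[ℝ] Lp ℝ v ν}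
    (hA : IsPQRegular A p q K) (hp : p ≠ 0) (hq : q ≠ 0) (hK : 0 ≤ K) : ‖A‖ ≤ K :=
  A.opNorm_le_bound hK (hA.norm_apply_le hp hq hK)

theorem of_tendsto [Fact (1 ≤ u)] [Fact (1 ≤ v)] (hp : 1 ≤ p) {β : Type*} {l : Filter β}
    [l.NeBot] {T : β → Lp ℝ u μ →L[ℝ] Lp ℝ v ν} {S : Lp ℝ u μ →L[ℝ] Lp ℝ v ν}
    (hTS : Tendsto T l (𝓝 S)) (hT : ∀ᶠ k in l, IsPQRegular (T k) p q K) :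
    IsPQRegular S p q K := by
  intro n f
  set Ψ := eLpNorm (fun ω => (∑ i, |f i ω| ^ q) ^ (1 / q)) u μ
  have hdist : Tendsto (fun k => ‖S - T k‖ * ∑ i, ‖f i‖) l (𝓝 0) := by
    simpa [norm_sub_rev] using (tendsto_iff_norm_sub_tendsto_zero.1 hTS).mul_const (∑ i, ‖f i‖)
  have hbound : Tendsto (fun k => ENNReal.ofReal (‖S - T k‖ * ∑ i, ‖f i‖) + ENNReal.ofReal K * Ψ)
      l (𝓝 (ENNReal.ofReal K * Ψ)) := by
    simpa using (ENNReal.tendsto_ofReal hdist).add_const (ENNReal.ofReal K * Ψ)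
  refine ge_of_tendsto hbound (hT.mono fun k hk => ?_)
  calc eLpNorm (pointwiseLpNorm p fun i => ⇑(S (f i))) v ν
      ≤ eLpNorm (pointwiseLpNorm p fun i => ⇑((S - T k) (f i))) v ν +
          eLpNorm (pointwiseLpNorm p fun i => ⇑(T k (f i))) v ν := by
        simpa using eLpNorm_pointwiseLpNorm_map_add_le hp (⇑(S - T k)) (⇑(T k)) f
    _ ≤ _ := add_le_add (eLpNorm_pointwiseLpNorm_apply_le hp _ f) (hk n f)

end IsPQRegular

end LpOperators

/-- The space of `(p,q)`-regular operators between Lebesgue spaces is complete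
with respect to the regularity "norm" `ρ_{p,q}`: a sequence of `(p,q)`-regular
operators which is Cauchy for `ρ_{p,q}` converges in `ρ_{p,q}` to a
`(p,q)`-regular operator. -/
theorem stmt4 {Ω Ω' : Type*} [MeasurableSpace Ω] [MeasurableSpace Ω']
    (μ : Measure Ω) (ν : Measure Ω') (u v : ℝ≥0∞) [Fact (1 ≤ u)] [Fact (1 ≤ v)]
    (p q : ℝ) (hq : 1 ≤ q) (hqp : q ≤ p)
    (T : ℕ → (Lp ℝ u μ →L[ℝ] Lp ℝ v ν))
    (hreg : ∀ n : ℕ, ∃ K : ℝ, 0 ≤ K ∧ IsPQRegular (⇑(T n)) p q K)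
    (hcauchy : ∀ ε : ℝ, 0 < ε → ∃ N : ℕ, ∀ m k : ℕ, N ≤ m → N ≤ k →
      IsPQRegular (⇑(T m - T k)) p q ε) :
    ∃ S : Lp ℝ u μ →L[ℝ] Lp ℝ v ν,
      (∃ K : ℝ, 0 ≤ K ∧ IsPQRegular (⇑S) p q K) ∧
      ∀ ε : ℝ, 0 < ε → ∃ N : ℕ, ∀ m : ℕ, N ≤ m →
        IsPQRegular (⇑(T m - S)) p q ε := by
  have hp : 1 ≤ p := hq.trans hqp
  have hT : CauchySeq T := Metric.cauchySeq_iff.2 fun ε hε => by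
    obtain ⟨N, hN⟩ := hcauchy (ε / 2) (half_pos hε)
    refine ⟨N, fun m hm k hk => ?_⟩
    rw [dist_eq_norm]
    exact ((hN m k hm hk).opNorm_le (by positivity) (by positivity) (half_pos hε).le).trans_lt
      (half_lt_self hε)
  obtain ⟨S, hTS⟩ := cauchySeq_tendsto_of_complete hT
  obtain ⟨N₁, hN₁⟩ := hcauchy 1 one_pos
  obtain ⟨K, hK, hTN₁⟩ := hreg N₁
  refine ⟨S, ⟨1 + K, by positivity, ?_⟩, fun ε hε => ?_⟩
  · refine IsPQRegular.of_tendsto hp hTS (eventually_atTop.2 ⟨N₁, fun k hk => ?_⟩)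
    simpa using (hN₁ k N₁ hk le_rfl).add hp hTN₁ zero_le_one hK
  · obtain ⟨N, hN⟩ := hcauchy ε hε
    exact ⟨N, fun m hm => IsPQRegular.of_tendsto hp (tendsto_const_nhds.sub hTS)
      (eventually_atTop.2 ⟨N, fun k hk => hN m k hm hk⟩)⟩
end

section
/- Let $(\Omega,\Sigma,\mu)$ and $(\Omega',\Sigma',\nu)$ be measure spaces and $1 \le r \le t < \infty$. Then every bounded linear operator $T : L^r(\mu) \to L^t(\nu)$ is $(t,r)$-regular with constant $\|T\|$, i.e. $\|(\sum_{i=1}^n |Tf_i|^t)^{1/t}\|_{L^t(\nu)} \le \|T\| \, \|(\sum_{i=1}^n |f_i|^r)^{1/r}\|_{L^r(\mu)}$ for every finite family $f_1,\dots,f_n \in L^r(\mu)$. -/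
/-!
Since the inner and outer exponents agree, the `L^c` norm of the pointwise `ℓ^c` sum of finitely
many functions is the `ℓ^c` sum of their `L^c` norms. The claim is thereby reduced to the
sequences of norms, where it follows from `‖T f_i‖ ≤ ‖T‖ ‖f_i‖` and the contractive inclusion
`ℓ^r ⊆ ℓ^t` for `r ≤ t`.
-/

open MeasureTheory ENNReal

open Finset

theorem ENNReal.sum_rpow_le_rpow_sum {ι : Type*} (s : Finset ι) (b : ι → ℝ≥0∞) {c : ℝ}
    (hc : 1 ≤ c) : ∑ i ∈ s, b i ^ c ≤ (∑ i ∈ s, b i) ^ c := by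
  induction s using Finset.cons_induction with
  | empty => simp [ENNReal.zero_rpow_of_pos (zero_lt_one.trans_le hc)]
  | cons a s _ ih =>
    rw [sum_cons, sum_cons]
    exact (add_le_add_right ih _).trans (ENNReal.add_rpow_le_rpow_add _ _ hc)

theorem ENNReal.rpow_sum_rpow_le {ι : Type*} (s : Finset ι) (b : ι → ℝ≥0∞) {p q : ℝ}
    (hp : 0 < p) (hpq : p ≤ q) :
    (∑ i ∈ s, b i ^ q) ^ (1 / q) ≤ (∑ i ∈ s, b i ^ p) ^ (1 / p) := by
  have hq : 0 < q := hp.trans_le hpq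
  have hb : ∀ i, b i ^ q = (b i ^ p) ^ (q / p) := fun i => by
    rw [← ENNReal.rpow_mul, mul_div_cancel₀ _ hp.ne']
  calc (∑ i ∈ s, b i ^ q) ^ (1 / q)
      ≤ ((∑ i ∈ s, b i ^ p) ^ (q / p)) ^ (1 / q) := by
        simp only [hb]
        gcongr
        exact ENNReal.sum_rpow_le_rpow_sum _ _ ((one_le_div hp).mpr hpq)
    _ = (∑ i ∈ s, b i ^ p) ^ (1 / p) := by
        rw [← ENNReal.rpow_mul]; congr 1; field_simp

theorem ENNReal.rpow_sum_rpow_const_mul {ι : Type*} (s : Finset ι) (C : ℝ≥0∞) (b : ι → ℝ≥0∞)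
    {p : ℝ} (hp : 0 < p) :
    (∑ i ∈ s, (C * b i) ^ p) ^ (1 / p) = C * (∑ i ∈ s, b i ^ p) ^ (1 / p) := by
  simp_rw [ENNReal.mul_rpow_of_nonneg _ _ hp.le]
  rw [← mul_sum, ENNReal.mul_rpow_of_nonneg _ _ (by positivity), ← ENNReal.rpow_mul,
    mul_one_div_cancel hp.ne', ENNReal.rpow_one]

theorem enorm_sum_abs_rpow_rpow_one_div {ι : Type*} (s : Finset ι) (x : ι → ℝ) {c : ℝ}
    (hc : 0 < c) : ‖(∑ i ∈ s, |x i| ^ c) ^ (1 / c)‖ₑ ^ c = ∑ i ∈ s, ‖x i‖ₑ ^ c := by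
  have hS : 0 ≤ ∑ i ∈ s, |x i| ^ c := sum_nonneg fun i _ => by positivity
  rw [Real.enorm_eq_ofReal (by positivity), ENNReal.ofReal_rpow_of_nonneg (by positivity) hc.le,
    ← Real.rpow_mul hS, one_div_mul_cancel hc.ne', Real.rpow_one,
    ENNReal.ofReal_sum_of_nonneg fun i _ => by positivity]
  refine sum_congr rfl fun i _ => ?_
  rw [Real.enorm_eq_ofReal_abs, ENNReal.ofReal_rpow_of_nonneg (abs_nonneg _) hc.le]

theorem eLpNorm_sum_abs_rpow_rpow_one_div {α ι : Type*} [MeasurableSpace α] (μ : Measure α)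
    (s : Finset ι) {g : ι → α → ℝ} (hg : ∀ i ∈ s, AEStronglyMeasurable (g i) μ) {c : ℝ}
    (hc : 0 < c) :
    eLpNorm (fun ω => (∑ i ∈ s, |g i ω| ^ c) ^ (1 / c)) (ENNReal.ofReal c) μ =
      (∑ i ∈ s, eLpNorm (g i) (ENNReal.ofReal c) μ ^ c) ^ (1 / c) := by
  have hc0 : ENNReal.ofReal c ≠ 0 := by simpa using hc
  simp only [eLpNorm_eq_lintegral_rpow_enorm_toReal hc0 ofReal_ne_top, toReal_ofReal hc.le,
    enorm_sum_abs_rpow_rpow_one_div _ _ hc]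
  rw [lintegral_finsetSum' s fun i hi => (hg i hi).enorm.pow_const c]
  congr 1
  refine sum_congr rfl fun i _ => ?_
  rw [← ENNReal.rpow_mul, one_div_mul_cancel hc.ne', ENNReal.rpow_one]

/-- For `1 ≤ r ≤ t < ∞`, every bounded linear operator `T : L^r(μ) → L^t(ν)`
is `(t,r)`-regular with constant `‖T‖`. -/
theorem stmt5 {Ω Ω' : Type*} [MeasurableSpace Ω] [MeasurableSpace Ω']
    (μ : Measure Ω) (ν : Measure Ω')
    (r t : ℝ) (hr : 1 ≤ r) (hrt : r ≤ t)
    [Fact (1 ≤ ENNReal.ofReal r)] [Fact (1 ≤ ENNReal.ofReal t)]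
    (T : Lp ℝ (ENNReal.ofReal r) μ →L[ℝ] Lp ℝ (ENNReal.ofReal t) ν) :
    IsPQRegular (⇑T) t r ‖T‖ := by
  intro n f
  have hr0 : 0 < r := zero_lt_one.trans_le hr
  have ht0 : 0 < t := hr0.trans_le hrt
  rw [eLpNorm_sum_abs_rpow_rpow_one_div ν univ (fun i _ => Lp.aestronglyMeasurable _) ht0,
    eLpNorm_sum_abs_rpow_rpow_one_div μ univ (fun i _ => Lp.aestronglyMeasurable _) hr0,
    ofReal_norm]
  simp only [← Lp.enorm_def]
  calc (∑ i, ‖T (f i)‖ₑ ^ t) ^ (1 / t)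
      ≤ (∑ i, (‖T‖ₑ * ‖f i‖ₑ) ^ t) ^ (1 / t) := by
        gcongr with i
        exact T.le_opENorm (f i)
    _ = ‖T‖ₑ * (∑ i, ‖f i‖ₑ ^ t) ^ (1 / t) := ENNReal.rpow_sum_rpow_const_mul _ _ _ ht0
    _ ≤ ‖T‖ₑ * (∑ i, ‖f i‖ₑ ^ r) ^ (1 / r) := by
        gcongr
        exact ENNReal.rpow_sum_rpow_le _ _ hr0 hrt
end

section
/- (Hölder inequality for vector expressions.) Let $(\Omega,\Sigma,\mu)$ be a measure space, $1 \le u \le \infty$ with conjugate exponent $u'$ ($1/u + 1/u' = 1$), and $1 \le r \le p, s < \infty$ with $1/r = 1/p + 1/s$. Then for all finite families $f_1,\dots,f_n \in L^u(\mu)$ and $g_1,\dots,g_n \in L^{u'}(\mu)$: $\int_{\Omega} \big(\sum_{i=1}^n |f_i g_i|^r\big)^{1/r} \, d\mu \le \big\|(\sum_{i=1}^n |f_i|^p)^{1/p}\big\|_{L^u(\mu)} \cdot \big\|(\sum_{i=1}^n |g_i|^s)^{1/s}\big\|_{L^{u'}(\mu)}$. -/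
/-! Pointwise, the finite-dimensional Hölder inequality with exponents `p, s, r` bounds the
integrand by `F ω * G ω`, where `F` and `G` are the two vector expressions; Hölder's inequality
for the conjugate pair `u, u'` then bounds `∫ F G` by `‖F‖_u ‖G‖_{u'}`. -/

open MeasureTheory ENNReal

theorem Real.Lr_le_Lp_mul_Lq {ι : Type*} (s : Finset ι) (f g : ι → ℝ) {p q r : ℝ}
    (hpqr : p.HolderTriple q r) :
    (∑ i ∈ s, |f i * g i| ^ r) ^ (1 / r) ≤
      (∑ i ∈ s, |f i| ^ p) ^ (1 / p) * (∑ i ∈ s, |g i| ^ q) ^ (1 / q) := by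
  simpa [abs_mul] using! NNReal.coe_le_coe.2 <| NNReal.Lr_le_Lp_mul_Lq s
    (fun i ↦ ⟨_, abs_nonneg (f i)⟩) (fun i ↦ ⟨_, abs_nonneg (g i)⟩) hpqr

theorem MeasureTheory.lintegral_ofReal_le_eLpNorm_mul_eLpNorm {Ω : Type*} [MeasurableSpace Ω]
    {μ : Measure Ω} {u u' : ℝ≥0∞} [HolderTriple u u' 1] {h F G : Ω → ℝ}
    (hF : AEStronglyMeasurable F μ) (hG : AEStronglyMeasurable G μ)
    (hle : ∀ᵐ ω ∂μ, h ω ≤ F ω * G ω) :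
    ∫⁻ ω, ENNReal.ofReal (h ω) ∂μ ≤ eLpNorm F u μ * eLpNorm G u' μ :=
  calc ∫⁻ ω, ENNReal.ofReal (h ω) ∂μ ≤ ∫⁻ ω, ‖F ω * G ω‖ₑ ∂μ :=
        lintegral_mono_ae <| hle.mono fun ω hω =>
          (ofReal_le_ofReal hω).trans (Real.ofReal_le_enorm _)
    _ = eLpNorm (fun ω => F ω * G ω) 1 μ := eLpNorm_one_eq_lintegral_enorm.symm
    _ ≤ eLpNorm F u μ * eLpNorm G u' μ := by
        simpa using eLpNorm_le_eLpNorm_mul_eLpNorm'_of_norm hF hG (· * ·) 1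
          (.of_forall fun ω => by simp [norm_mul])

theorem stmt6_general {Ω : Type*} [MeasurableSpace Ω] (μ : Measure Ω)
    (u u' : ℝ≥0∞) (huu' : 1 / u + 1 / u' = 1)
    (r p s : ℝ) (hr : 1 ≤ r) (hrp : r ≤ p) (hrs : r ≤ s)
    (hc : 1 / r = 1 / p + 1 / s)
    (n : ℕ) (f : Fin n → Lp ℝ u μ) (g : Fin n → Lp ℝ u' μ) :
    ∫⁻ ω, ENNReal.ofReal ((∑ i, |f i ω * g i ω| ^ r) ^ (1 / r)) ∂μ ≤
      eLpNorm (fun ω => (∑ i, |f i ω| ^ p) ^ (1 / p)) u μ *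
        eLpNorm (fun ω => (∑ i, |g i ω| ^ s) ^ (1 / s)) u' μ := by
  have : HolderTriple u u' 1 := ⟨by simpa using huu'⟩
  have hpsr : p.HolderTriple s r :=
    ⟨by simpa only [one_div] using hc.symm, by linarith, by linarith⟩
  have hf (i : Fin n) := (Lp.aestronglyMeasurable (f i)).aemeasurable
  have hg (i : Fin n) := (Lp.aestronglyMeasurable (g i)).aemeasurable
  exact lintegral_ofReal_le_eLpNorm_mul_eLpNorm
    (by fun_prop : AEMeasurable _ μ).aestronglyMeasurable
    (by fun_prop : AEMeasurable _ μ).aestronglyMeasurable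
    (.of_forall fun ω => Real.Lr_le_Lp_mul_Lq _ _ _ hpsr)

/-- Hölder's inequality for vector expressions: for `1/u + 1/u' = 1` and
`1/r = 1/p + 1/s`,
`∫ (∑ᵢ |fᵢ gᵢ|^r)^(1/r) dμ ≤ ‖(∑ᵢ |fᵢ|^p)^(1/p)‖_u ‖(∑ᵢ |gᵢ|^s)^(1/s)‖_{u'}`. -/
theorem stmt6 {Ω : Type*} [MeasurableSpace Ω] (μ : Measure Ω)
    (u u' : ℝ≥0∞) (hu : 1 ≤ u) (huu' : 1 / u + 1 / u' = 1)
    (r p s : ℝ) (hr : 1 ≤ r) (hrp : r ≤ p) (hrs : r ≤ s)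
    (hc : 1 / r = 1 / p + 1 / s)
    (n : ℕ) (f : Fin n → Lp ℝ u μ) (g : Fin n → Lp ℝ u' μ) :
    ∫⁻ ω, ENNReal.ofReal ((∑ i, |f i ω * g i ω| ^ r) ^ (1 / r)) ∂μ ≤
      eLpNorm (fun ω => (∑ i, |f i ω| ^ p) ^ (1 / p)) u μ *
        eLpNorm (fun ω => (∑ i, |g i ω| ^ s) ^ (1 / s)) u' μ :=
  stmt6_general μ u u' huu' r p s hr hrp hrs hc n f g
end

section
/- (Duality formula.) Let $(\Omega,\Sigma,\mu)$ be a $\sigma$-finite measure space, $1 \le u < \infty$ with conjugate exponent $u'$, and $1 \le r \le p, s < \infty$ with $1/r = 1/p + 1/s$. Then for every finite family $f_1,\dots,f_n \in L^u(\mu)$: $\big\|(\sum_{i=1}^n |f_i|^p)^{1/p}\big\|_{L^u(\mu)} = \sup \Big\{ \int_{\Omega} \big(\sum_{i=1}^n |f_i g_i|^r\big)^{1/r} d\mu \ : \ g_1,\dots,g_n \in L^{u'}(\mu), \ \big\|(\sum_{i=1}^n |g_i|^s)^{1/s}\big\|_{L^{u'}(\mu)} \le 1 \Big\}$. -/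
/-!
With `F = (∑ᵢ |fᵢ|^p)^(1/p)` and `G = (∑ᵢ |gᵢ|^s)^(1/s)`, Hölder's inequality pointwise
(`ℓ^p × ℓ^s → ℓ^r`) and then in `L^u × L^u' → L^1` bounds every value by `‖F‖_u ‖G‖_u'`.
The bound `‖F‖_u` is attained: `k = (F / ‖F‖_u)^(u-1)` satisfies `‖k‖_u' ≤ 1` and
`∫ F k = ‖F‖_u`, and at each point the vector `gᵢ ∝ |fᵢ|^(p/s)` with `ℓ^s`-norm `k` gives
equality in the pointwise Hölder inequality, i.e. `(∑ᵢ |fᵢ gᵢ|^r)^(1/r) = F k`.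
-/

open MeasureTheory ENNReal

noncomputable def ellNorm {ι : Type*} [Fintype ι] (p : ℝ) (a : ι → ℝ) : ℝ :=
  (∑ i, |a i| ^ p) ^ (1 / p)

section ellNorm

variable {ι : Type*} [Fintype ι] {p r s : ℝ}

lemma ellNorm_nonneg (p : ℝ) (a : ι → ℝ) : 0 ≤ ellNorm p a :=
  Real.rpow_nonneg (Finset.sum_nonneg fun _ _ => Real.rpow_nonneg (abs_nonneg _) _) _

lemma ellNorm_rpow (hp : p ≠ 0) (a : ι → ℝ) : ellNorm p a ^ p = ∑ i, |a i| ^ p := by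
  rw [ellNorm, one_div,
    Real.rpow_inv_rpow (Finset.sum_nonneg fun _ _ => Real.rpow_nonneg (abs_nonneg _) _) hp]

lemma ellNorm_eq_of_rpow_eq (hp : p ≠ 0) {a : ι → ℝ} {x : ℝ} (hx : 0 ≤ x)
    (h : ∑ i, |a i| ^ p = x ^ p) : ellNorm p a = x := by
  rw [ellNorm, h, one_div, Real.rpow_rpow_inv hx hp]

lemma ellNorm_congr_abs {a b : ι → ℝ} (h : ∀ i, |a i| = |b i|) : ellNorm p a = ellNorm p b := by
  simp only [ellNorm, h]

lemma abs_le_ellNorm (hp : 0 < p) (a : ι → ℝ) (i : ι) : |a i| ≤ ellNorm p a := by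
  rw [← Real.rpow_le_rpow_iff (abs_nonneg _) (ellNorm_nonneg _ _) hp, ellNorm_rpow hp.ne']
  exact Finset.single_le_sum (fun j _ => Real.rpow_nonneg (abs_nonneg (a j)) _) (Finset.mem_univ i)

lemma ellNorm_le_card_rpow_mul_sum_abs (hp : 0 < p) (a : ι → ℝ) :
    ellNorm p a ≤ (Fintype.card ι : ℝ) ^ (1 / p) * ∑ i, |a i| := by
  have hS : 0 ≤ ∑ i, |a i| := Finset.sum_nonneg fun i _ => abs_nonneg (a i)
  calc ellNorm p a ≤ (∑ _i : ι, (∑ i, |a i|) ^ p) ^ (1 / p) := by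
        refine Real.rpow_le_rpow (Finset.sum_nonneg fun _ _ => Real.rpow_nonneg (abs_nonneg _) _)
          (Finset.sum_le_sum fun i _ => Real.rpow_le_rpow (abs_nonneg _) ?_ hp.le)
          (one_div_nonneg.2 hp.le)
        exact Finset.single_le_sum (fun j _ => abs_nonneg (a j)) (Finset.mem_univ i)
    _ = (Fintype.card ι : ℝ) ^ (1 / p) * ∑ i, |a i| := by
        rw [Finset.sum_const, Finset.card_univ, nsmul_eq_mul,
          Real.mul_rpow (Nat.cast_nonneg _) (Real.rpow_nonneg hS _), one_div,
          Real.rpow_rpow_inv hS hp.ne']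

lemma ellNorm_mul_le (h : p.HolderTriple s r) (a b : ι → ℝ) :
    ellNorm r (fun i => a i * b i) ≤ ellNorm p a * ellNorm s b := by
  rw [← Real.rpow_le_rpow_iff (ellNorm_nonneg _ _)
      (mul_nonneg (ellNorm_nonneg _ _) (ellNorm_nonneg _ _)) h.pos',
    ellNorm_rpow h.ne_zero', Real.mul_rpow (ellNorm_nonneg _ _) (ellNorm_nonneg _ _), ellNorm,
    ellNorm, ← Real.rpow_mul (Finset.sum_nonneg fun _ _ => Real.rpow_nonneg (abs_nonneg _) _),
    ← Real.rpow_mul (Finset.sum_nonneg fun _ _ => Real.rpow_nonneg (abs_nonneg _) _),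
    one_div_mul_eq_div, one_div_mul_eq_div]
  exact Real.Lr_rpow_le_Lp_mul_Lq _ a b h

lemma ellNorm_abs_rpow_mul {q : ℝ} (hq : 0 < q) (hs : 0 < s) (a : ι → ℝ) {c : ℝ} (hc : 0 ≤ c) :
    ellNorm s (fun i => |a i| ^ (q / s) * c) = ellNorm q a ^ (q / s) * c := by
  have hN := ellNorm_nonneg q a
  refine ellNorm_eq_of_rpow_eq hs.ne' (by positivity) ?_
  have hterm : ∀ i, |(|a i| ^ (q / s) * c)| ^ s = |a i| ^ q * c ^ s := fun i => by
    rw [abs_of_nonneg (by positivity), Real.mul_rpow (by positivity) hc,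
      ← Real.rpow_mul (abs_nonneg _), div_mul_cancel₀ _ hs.ne']
  rw [Finset.sum_congr rfl fun i _ => hterm i, ← Finset.sum_mul, ← ellNorm_rpow hq.ne',
    Real.mul_rpow (by positivity) hc, ← Real.rpow_mul hN, div_mul_cancel₀ _ hs.ne']

variable {c : ℝ}

/-- The equality case of Hölder's inequality: `b i ∝ |a i| ^ (p / s)`, scaled so that
`‖b‖_s = c`; for `a = 0` the division by `0` makes `b = 0`. -/
noncomputable def normingVector (p s c : ℝ) (a : ι → ℝ) : ι → ℝ :=
  fun i => |a i| ^ (p / s) * (c / ellNorm p a ^ (p / s))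

lemma normingVector_nonneg (hc : 0 ≤ c) (a : ι → ℝ) : 0 ≤ normingVector p s c a := fun i => by
  have := ellNorm_nonneg p a
  unfold normingVector
  positivity

lemma ellNorm_normingVector_le (hp : 0 < p) (hs : 0 < s) (hc : 0 ≤ c) (a : ι → ℝ) :
    ellNorm s (normingVector p s c a) ≤ c := by
  have hN := ellNorm_nonneg p a
  unfold normingVector
  rw [ellNorm_abs_rpow_mul hp hs a (by positivity)]
  rcases (Real.rpow_nonneg hN (p / s)).eq_or_lt with h0 | hpos
  · rw [← h0]; simpa using hc
  · rw [mul_div_cancel₀ _ hpos.ne']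

lemma ellNorm_mul_normingVector (h : p.HolderTriple s r) (hc : 0 ≤ c) (a : ι → ℝ) :
    ellNorm r (fun i => a i * normingVector p s c a i) = ellNorm p a * c := by
  have hN := ellNorm_nonneg p a
  have hps : 0 < p / s := div_pos h.pos h.symm.pos
  have hpr : p / r = 1 + p / s := by
    rw [div_eq_mul_one_div, h.one_div_eq, mul_add, mul_one_div_cancel h.ne_zero,
      ← div_eq_mul_one_div]
  have habs : ∀ i, |a i * normingVector p s c a i| =
      |a i| ^ (p / r) * (c / ellNorm p a ^ (p / s)) := fun i => by
      rw [abs_mul, abs_of_nonneg (normingVector_nonneg hc a i), normingVector, ← mul_assoc, hpr,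
        Real.rpow_add' (abs_nonneg _) (by positivity), Real.rpow_one]
  rw [ellNorm_congr_abs fun i => (habs i).trans (abs_of_nonneg (by positivity)).symm,
    ellNorm_abs_rpow_mul h.pos h.pos' a (by positivity), hpr,
    Real.rpow_add' hN (by positivity), Real.rpow_one]
  rcases hN.eq_or_lt with h0 | hpos
  · rw [← h0]; simp
  · field_simp

end ellNorm

section Measure

variable {Ω ι : Type*} [MeasurableSpace Ω] {μ : Measure Ω} [Fintype ι] {p r s : ℝ}
  {u u' : ℝ≥0∞}

lemma AEMeasurable.ellNorm {f : ι → Ω → ℝ} (hf : ∀ i, AEMeasurable (f i) μ) :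
    AEMeasurable (fun ω => ellNorm p fun i => f i ω) μ :=
  (Finset.aemeasurable_fun_sum _ fun i _ => (hf i).abs.pow_const p).pow_const _

lemma MemLp.ellNorm (hp : 0 < p) {f : ι → Ω → ℝ} (hf : ∀ i, MemLp (f i) u μ) :
    MemLp (fun ω => ellNorm p fun i => f i ω) u μ := by
  refine ((memLp_finsetSum Finset.univ fun i _ => (hf i).abs).const_mul
    ((Fintype.card ι : ℝ) ^ (1 / p))).of_le
    (AEMeasurable.ellNorm fun i => (hf i).aemeasurable).aestronglyMeasurable
    (ae_of_all _ fun ω => ?_)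
  rw [Real.norm_of_nonneg (ellNorm_nonneg _ _)]
  exact (ellNorm_le_card_rpow_mul_sum_abs hp fun i => f i ω).trans (Real.le_norm_self _)

lemma lintegral_ellNorm_mul_le [u.HolderConjugate u'] (h : p.HolderTriple s r)
    {f g : ι → Ω → ℝ} (hf : ∀ i, AEMeasurable (f i) μ) (hg : ∀ i, AEMeasurable (g i) μ) :
    ∫⁻ ω, ENNReal.ofReal (ellNorm r fun i => f i ω * g i ω) ∂μ ≤
      eLpNorm (fun ω => ellNorm p fun i => f i ω) u μ *
        eLpNorm (fun ω => ellNorm s fun i => g i ω) u' μ := by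
  set F := fun ω => ellNorm p fun i => f i ω
  set G := fun ω => ellNorm s fun i => g i ω
  calc ∫⁻ ω, ENNReal.ofReal (ellNorm r fun i => f i ω * g i ω) ∂μ
      ≤ ∫⁻ ω, ‖F ω * G ω‖ₑ ∂μ := lintegral_mono fun ω =>
        (ENNReal.ofReal_le_ofReal (ellNorm_mul_le h _ _)).trans (Real.ofReal_le_enorm _)
    _ = eLpNorm (fun ω => F ω * G ω) 1 μ := eLpNorm_one_eq_lintegral_enorm.symm
    _ ≤ eLpNorm F u μ * eLpNorm G u' μ := by
        simpa using eLpNorm_le_eLpNorm_mul_eLpNorm_of_nnnorm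
          (AEMeasurable.ellNorm hf).aestronglyMeasurable
          (AEMeasurable.ellNorm hg).aestronglyMeasurable (· * ·) 1
          (ae_of_all _ fun ω => by simp [nnnorm_mul]) (p := u) (q := u') (r := 1)

lemma lintegral_enorm_rpow_eq_one {G : Ω → ℝ} (hu0 : u ≠ 0) (hu : u ≠ ∞)
    (hG : eLpNorm G u μ = 1) : ∫⁻ ω, ‖G ω‖ₑ ^ u.toReal ∂μ = 1 := by
  rw [lintegral_rpow_enorm_eq_rpow_eLpNorm' (ENNReal.toReal_pos hu0 hu),
    ← eLpNorm_eq_eLpNorm' hu0 hu, hG, ENNReal.one_rpow]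

lemma eLpNorm_abs_rpow_sub_one_le_one [u.HolderConjugate u'] (hu : u ≠ ∞) {G : Ω → ℝ}
    (hG : eLpNorm G u μ = 1) : eLpNorm (fun ω => |G ω| ^ (u.toReal - 1)) u' μ ≤ 1 := by
  rcases eq_or_ne u 1 with rfl | hu1
  · have : u' = ∞ := (HolderConjugate.eq_top_iff_eq_one u' 1).2 rfl
    subst this
    simpa using eLpNormEssSup_le_of_ae_bound (μ := μ) (f := fun _ : Ω => (1 : ℝ)) (C := 1)
      (ae_of_all _ fun _ => by simp)
  have hu' : u' ≠ ∞ := (HolderConjugate.ne_top_iff_ne_one u' u).2 hu1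
  have ht : u.toReal.HolderConjugate u'.toReal := HolderConjugate.toReal_of_ne_top hu hu'
  have hexp : u' * ENNReal.ofReal (u.toReal - 1) = u := by
    rw [← ENNReal.ofReal_toReal hu', ← ENNReal.ofReal_mul ENNReal.toReal_nonneg, mul_comm,
      ht.sub_one_mul_conj, ENNReal.ofReal_toReal hu]
  simpa [hexp, hG] using (eLpNorm_norm_rpow (p := u') (μ := μ) G ht.sub_one_pos).le

lemma exists_eLpNorm_le_one_lintegral_mul_eq [u.HolderConjugate u'] (hu : u ≠ ∞) {F : Ω → ℝ}
    (hF0 : 0 ≤ F) (hF : MemLp F u μ) :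
    ∃ k : Ω → ℝ, 0 ≤ k ∧ AEMeasurable k μ ∧ eLpNorm k u' μ ≤ 1 ∧
      ∫⁻ ω, ENNReal.ofReal (F ω * k ω) ∂μ = eLpNorm F u μ := by
  set c := eLpNorm F u μ
  rcases eq_or_ne c 0 with hc0 | hc0
  · exact ⟨0, le_rfl, aemeasurable_const, by simp, by simp [hc0]⟩
  have hc_top : c ≠ ∞ := hF.eLpNorm_ne_top
  set t := u.toReal
  have ht : 1 ≤ t := by simpa using ENNReal.toReal_mono hu (HolderConjugate.one_le u u')
  set G := fun ω => c.toReal⁻¹ * F ω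
  have hG0 : 0 ≤ G := fun ω => mul_nonneg (inv_nonneg.2 ENNReal.toReal_nonneg) (hF0 ω)
  have hG : eLpNorm G u μ = 1 := by
    rw [show G = c.toReal⁻¹ • F from rfl, eLpNorm_const_smul,
      Real.enorm_eq_ofReal (inv_nonneg.2 ENNReal.toReal_nonneg),
      ENNReal.ofReal_inv_of_pos (ENNReal.toReal_pos hc0 hc_top), ENNReal.ofReal_toReal hc_top,
      ENNReal.inv_mul_cancel hc0 hc_top]
  have hpt : ∀ ω, ENNReal.ofReal (F ω * |G ω| ^ (t - 1)) = c * ‖G ω‖ₑ ^ t := fun ω => by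
    have hF : F ω = c.toReal * G ω := by
      simp only [G, ← mul_assoc, mul_inv_cancel₀ (ENNReal.toReal_pos hc0 hc_top).ne', one_mul]
    rw [hF, abs_of_nonneg (hG0 ω), mul_assoc, ← Real.rpow_one_add' (hG0 ω) (by linarith),
      add_sub_cancel, ENNReal.ofReal_mul ENNReal.toReal_nonneg, ENNReal.ofReal_toReal hc_top,
      Real.enorm_eq_ofReal (hG0 ω), ENNReal.ofReal_rpow_of_nonneg (hG0 ω) (by linarith)]
  refine ⟨fun ω => |G ω| ^ (t - 1), fun ω => by positivity, ?_,
    eLpNorm_abs_rpow_sub_one_le_one hu hG, ?_⟩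
  · exact ((hF.aemeasurable.const_mul _).abs).pow_const _
  · rw [lintegral_congr hpt, lintegral_const_mul' _ _ hc_top,
      lintegral_enorm_rpow_eq_one (HolderConjugate.ne_zero u u') hu hG, mul_one]

lemma exists_Lp_ellNorm_le_and_ellNorm_mul_eq (h : p.HolderTriple s r) {f : ι → Ω → ℝ}
    (hf : ∀ i, AEMeasurable (f i) μ) {k : Ω → ℝ} (hk0 : 0 ≤ k) (hk : MemLp k u' μ) :
    ∃ g : ι → Lp ℝ u' μ, ∀ᵐ ω ∂μ, (ellNorm s fun i => g i ω) ≤ k ω ∧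
      (ellNorm r fun i => f i ω * g i ω) = (ellNorm p fun i => f i ω) * k ω := by
  set g₀ : ι → Ω → ℝ := fun i ω => normingVector p s (k ω) (fun j => f j ω) i
  have hg₀_le : ∀ ω, (ellNorm s fun i => g₀ i ω) ≤ k ω := fun ω =>
    ellNorm_normingVector_le h.pos h.symm.pos (hk0 ω) _
  have hg₀ : ∀ i, MemLp (g₀ i) u' μ := fun i => by
    refine hk.of_le (((hf i).abs.pow_const _).mul
      (hk.aemeasurable.div ((AEMeasurable.ellNorm hf).pow_const _))).aestronglyMeasurable
      (ae_of_all _ fun ω => ?_)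
    rw [Real.norm_eq_abs, Real.norm_of_nonneg (hk0 ω)]
    exact (abs_le_ellNorm h.symm.pos (fun i => g₀ i ω) i).trans (hg₀_le ω)
  have hae : ∀ᵐ ω ∂μ, ∀ i, (hg₀ i).toLp (g₀ i) ω = g₀ i ω :=
    ae_all_iff.2 fun i => (hg₀ i).coeFn_toLp
  refine ⟨fun i => (hg₀ i).toLp (g₀ i), hae.mono fun ω hω => ?_⟩
  simp only [hω]
  exact ⟨hg₀_le ω, ellNorm_mul_normingVector h (hk0 ω) _⟩

end Measure

theorem stmt7_general {Ω : Type*} [MeasurableSpace Ω] (μ : Measure Ω)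
    (u u' : ℝ≥0∞) (hu_top : u ≠ ∞) (huu' : 1 / u + 1 / u' = 1)
    (r p s : ℝ) (hr : 1 ≤ r) (hrp : r ≤ p) (hrs : r ≤ s)
    (hc : 1 / r = 1 / p + 1 / s)
    (n : ℕ) (f : Fin n → Lp ℝ u μ) :
    eLpNorm (fun ω => (∑ i, |f i ω| ^ p) ^ (1 / p)) u μ =
      ⨆ (g : Fin n → Lp ℝ u' μ)
        (_ : eLpNorm (fun ω => (∑ i, |g i ω| ^ s) ^ (1 / s)) u' μ ≤ 1),
        ∫⁻ ω, ENNReal.ofReal ((∑ i, |f i ω * g i ω| ^ r) ^ (1 / r)) ∂μ := by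
  have hpsr : p.HolderTriple s r :=
    ⟨by simpa only [one_div] using hc.symm, by linarith, by linarith⟩
  have : u.HolderConjugate u' := holderConjugate_iff.2 (by simpa only [one_div] using huu')
  have hf : ∀ i, AEMeasurable (f i) μ := fun i => (Lp.aestronglyMeasurable (f i)).aemeasurable
  refine le_antisymm ?_ (iSup₂_le fun g hg => ?_)
  · obtain ⟨k, hk0, hk, hk1, hFk⟩ := exists_eLpNorm_le_one_lintegral_mul_eq (u' := u') hu_top
      (fun ω => ellNorm_nonneg _ _) (MemLp.ellNorm hpsr.pos fun i => Lp.memLp (f i))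
    obtain ⟨g, hg⟩ := exists_Lp_ellNorm_le_and_ellNorm_mul_eq hpsr hf hk0
      ⟨hk.aestronglyMeasurable, hk1.trans_lt one_lt_top⟩
    refine le_iSup₂_of_le g ?_ (hFk.symm.trans (lintegral_congr_ae ?_)).le
    · exact (eLpNorm_mono_ae_real (hg.mono fun ω hω =>
        (Real.norm_of_nonneg (ellNorm_nonneg _ _)).trans_le hω.1)).trans hk1
    · exact hg.mono fun ω hω => congrArg ENNReal.ofReal hω.2.symm
  · have hg' : ∀ i, AEMeasurable (g i) μ := fun i => (Lp.aestronglyMeasurable (g i)).aemeasurable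
    exact (lintegral_ellNorm_mul_le hpsr hf hg').trans (mul_le_of_le_one_right' hg)

/-- Duality formula: for a σ-finite measure, `1 ≤ u < ∞` with conjugate `u'`
and `1/r = 1/p + 1/s`, the norm `‖(∑ᵢ |fᵢ|^p)^(1/p)‖_u` equals the supremum of
`∫ (∑ᵢ |fᵢ gᵢ|^r)^(1/r) dμ` over families `g` with
`‖(∑ᵢ |gᵢ|^s)^(1/s)‖_{u'} ≤ 1`. -/
theorem stmt7 {Ω : Type*} [MeasurableSpace Ω] (μ : Measure Ω) [SigmaFinite μ]
    (u u' : ℝ≥0∞) (hu : 1 ≤ u) (hu_top : u ≠ ∞) (huu' : 1 / u + 1 / u' = 1)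
    (r p s : ℝ) (hr : 1 ≤ r) (hrp : r ≤ p) (hrs : r ≤ s)
    (hc : 1 / r = 1 / p + 1 / s)
    (n : ℕ) (f : Fin n → Lp ℝ u μ) :
    eLpNorm (fun ω => (∑ i, |f i ω| ^ p) ^ (1 / p)) u μ =
      ⨆ (g : Fin n → Lp ℝ u' μ)
        (_ : eLpNorm (fun ω => (∑ i, |g i ω| ^ s) ^ (1 / s)) u' μ ≤ 1),
        ∫⁻ ω, ENNReal.ofReal ((∑ i, |f i ω * g i ω| ^ r) ^ (1 / r)) ∂μ :=
  stmt7_general μ u u' hu_top huu' r p s hr hrp hrs hc n f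
end

section
/- Let $(\Omega,\Sigma,\mu)$ and $(\Omega',\Sigma',\nu)$ be $\sigma$-finite measure spaces, $1 \le u < \infty$, $1 < v < \infty$ with conjugate exponent $v'$, and let $1 \le r \le p, s < \infty$ satisfy $1/r = 1/p + 1/s$ and $1 \le q \le p$. For a bounded linear operator $T : L^u(\mu) \to L^v(\nu)$ and $K \ge 0$, the following are equivalent: (i) $T$ is $(p,q)$-regular with constant $K$; (ii) for all finite families $f_1,\dots,f_n \in L^u(\mu)$ and $g_1,\dots,g_n \in L^{v'}(\nu)$: $\int_{\Omega'} \big(\sum_{i=1}^n |(Tf_i)\, g_i|^r\big)^{1/r} d\nu \le K \, \big\|(\sum_{i=1}^n |f_i|^q)^{1/q}\big\|_{L^u(\mu)} \, \big\|(\sum_{i=1}^n |g_i|^s)^{1/s}\big\|_{L^{v'}(\nu)}$. -/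
/-!
For (i) ⇒ (ii), the pointwise three-exponent Hölder inequality
`(∑ |aᵢ bᵢ|^r)^(1/r) ≤ (∑ |aᵢ|^p)^(1/p) (∑ |bᵢ|^s)^(1/s)` is integrated and followed by Hölder's
inequality for the conjugate pair `v, v'`.

For (ii) ⇒ (i), put `F = (∑ |T fᵢ|^p)^(1/p)` and test (ii) against the extremal family
`gᵢ = |T fᵢ|^(p/s) F^(v - p/r)`. Since `p/r = 1 + p/s`, pointwise `(∑ |T fᵢ gᵢ|^r)^(1/r) = F^v` and
`(∑ |gᵢ|^s)^(1/s) = F^(v-1)`, whose `L^{v'}` norm is `‖F‖_v^(v-1)`. So (ii) reads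
`‖F‖_v^v ≤ K ‖(∑ |fᵢ|^q)^(1/q)‖_u ‖F‖_v^(v-1)`, and dividing by the finite `‖F‖_v^(v-1)` gives (i).
-/

open MeasureTheory ENNReal

lemma Real.HolderTriple.div_eq_one_add_div {p s r : ℝ} (h : p.HolderTriple s r) :
    p / r = 1 + p / s := by
  have hp := h.pos
  have hs := h.symm.pos
  have hr := h.pos'
  have := h.one_div_eq
  field_simp at this ⊢
  linarith

section FinLpNorm

variable {ι : Type*} [Fintype ι]

noncomputable def finLpNorm (p : ℝ) (a : ι → ℝ) : ℝ := (∑ i, |a i| ^ p) ^ (1 / p)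

lemma finLpNorm_nonneg (p : ℝ) (a : ι → ℝ) : 0 ≤ finLpNorm p a :=
  Real.rpow_nonneg (Finset.sum_nonneg fun _ _ => Real.rpow_nonneg (abs_nonneg _) _) _

lemma finLpNorm_rpow {p : ℝ} (hp : p ≠ 0) (a : ι → ℝ) : finLpNorm p a ^ p = ∑ i, |a i| ^ p := by
  rw [finLpNorm, ← Real.rpow_mul (Finset.sum_nonneg fun _ _ => Real.rpow_nonneg (abs_nonneg _) _),
    one_div_mul_cancel hp, Real.rpow_one]

lemma abs_le_finLpNorm {p : ℝ} (hp : 0 < p) (a : ι → ℝ) (i : ι) : |a i| ≤ finLpNorm p a := by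
  rw [← Real.rpow_le_rpow_iff (abs_nonneg _) (finLpNorm_nonneg p a) hp, finLpNorm_rpow hp.ne']
  exact Finset.single_le_sum (fun j _ => Real.rpow_nonneg (abs_nonneg (a j)) p) (Finset.mem_univ i)

lemma finLpNorm_le_card_rpow_mul_sum_abs {p : ℝ} (hp : 0 < p) (a : ι → ℝ) :
    finLpNorm p a ≤ (Fintype.card ι : ℝ) ^ (1 / p) * ∑ i, |a i| := by
  have hS : 0 ≤ ∑ i, |a i| := Finset.sum_nonneg fun _ _ => abs_nonneg _
  have hsum : ∑ i, |a i| ^ p ≤ Fintype.card ι * (∑ i, |a i|) ^ p := by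
    rw [← nsmul_eq_mul, ← Finset.card_univ, ← Finset.sum_const]
    exact Finset.sum_le_sum fun i _ => Real.rpow_le_rpow (abs_nonneg _)
      (Finset.single_le_sum (fun j _ => abs_nonneg (a j)) (Finset.mem_univ i)) hp.le
  calc finLpNorm p a ≤ (Fintype.card ι * (∑ i, |a i|) ^ p) ^ (1 / p) :=
        Real.rpow_le_rpow (Finset.sum_nonneg fun _ _ => Real.rpow_nonneg (abs_nonneg _) _) hsum
          (by positivity)
    _ = (Fintype.card ι : ℝ) ^ (1 / p) * ∑ i, |a i| := by
        rw [Real.mul_rpow (Nat.cast_nonneg _) (Real.rpow_nonneg hS _),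
          one_div, Real.rpow_rpow_inv hS hp.ne']

lemma finLpNorm_mul_le {p s r : ℝ} (h : p.HolderTriple s r) (a b : ι → ℝ) :
    finLpNorm r (fun i => a i * b i) ≤ finLpNorm p a * finLpNorm s b := by
  have hr := h.pos'
  calc finLpNorm r (fun i => a i * b i)
      ≤ ((∑ i, |a i| ^ p) ^ (r / p) * (∑ i, |b i| ^ s) ^ (r / s)) ^ (1 / r) :=
        Real.rpow_le_rpow (Finset.sum_nonneg fun _ _ => Real.rpow_nonneg (abs_nonneg _) _)
          (Real.Lr_rpow_le_Lp_mul_Lq Finset.univ a b h) (by positivity)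
    _ = finLpNorm p a * finLpNorm s b := by
        rw [Real.mul_rpow (by positivity) (by positivity), ← Real.rpow_mul (by positivity),
          ← Real.rpow_mul (by positivity), finLpNorm, finLpNorm]
        congr 2 <;> field_simp

lemma finLpNorm_eq_of_abs_rpow_eq {p t c : ℝ} (hp : p ≠ 0) (ht : 0 < t) (hc : 0 ≤ c)
    {a x : ι → ℝ} (hx : ∀ i, |x i| ^ t = |a i| ^ p * c ^ t) :
    finLpNorm t x = finLpNorm p a ^ (p / t) * c := by
  rw [finLpNorm, Finset.sum_congr rfl fun i _ => hx i, ← Finset.sum_mul, ← finLpNorm_rpow hp,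
    Real.mul_rpow (Real.rpow_nonneg (finLpNorm_nonneg p a) _) (Real.rpow_nonneg hc _),
    ← Real.rpow_mul (finLpNorm_nonneg p a), mul_one_div, one_div, Real.rpow_rpow_inv hc ht.ne']

lemma finLpNorm_rpow_div_mul {p s c : ℝ} (hp : p ≠ 0) (hs : 0 < s) (hc : 0 ≤ c) (a : ι → ℝ) :
    finLpNorm s (fun i => |a i| ^ (p / s) * c) = finLpNorm p a ^ (p / s) * c :=
  finLpNorm_eq_of_abs_rpow_eq hp hs hc fun i => by
    rw [abs_of_nonneg (by positivity), Real.mul_rpow (by positivity) hc,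
      ← Real.rpow_mul (abs_nonneg _), div_mul_cancel₀ _ hs.ne']

lemma finLpNorm_mul_rpow_div_mul {p s r c : ℝ} (h : p.HolderTriple s r) (hc : 0 ≤ c)
    (a : ι → ℝ) :
    finLpNorm r (fun i => a i * (|a i| ^ (p / s) * c)) = finLpNorm p a ^ (p / r) * c := by
  have hp := h.pos
  have hs := h.symm.pos
  have hexp : (1 + p / s) * r = p := by rw [← h.div_eq_one_add_div, div_mul_cancel₀ _ h.ne_zero']
  refine finLpNorm_eq_of_abs_rpow_eq h.ne_zero h.pos' hc fun i => ?_
  rw [abs_mul, abs_of_nonneg (show 0 ≤ |a i| ^ (p / s) * c by positivity), ← mul_assoc,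
    Real.mul_rpow (mul_nonneg (abs_nonneg _) (Real.rpow_nonneg (abs_nonneg _) _)) hc]
  congr 1
  rw [← Real.rpow_one_add' (abs_nonneg _) (by positivity), ← Real.rpow_mul (abs_nonneg _), hexp]

end FinLpNorm

section Measure

variable {α : Type*} [MeasurableSpace α] {μ : Measure α}

lemma aestronglyMeasurable_finLpNorm {ι : Type*} [Fintype ι] (p : ℝ) {h : ι → α → ℝ}
    (hh : ∀ i, AEStronglyMeasurable (h i) μ) :
    AEStronglyMeasurable (fun x => finLpNorm p (fun i => h i x)) μ :=
  ((Finset.aemeasurable_fun_sum _ fun i _ =>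
    (hh i).aemeasurable.abs.pow_const p).pow_const _).aestronglyMeasurable

lemma memLp_finLpNorm {ι : Type*} [Fintype ι] {p : ℝ} (hp : 0 < p) {v : ℝ≥0∞}
    {h : ι → α → ℝ} (hh : ∀ i, MemLp (h i) v μ) :
    MemLp (fun x => finLpNorm p (fun i => h i x)) v μ := by
  refine MemLp.of_le ((memLp_finsetSum' Finset.univ fun i _ => (hh i).abs).const_mul
    ((Fintype.card ι : ℝ) ^ (1 / p))) (aestronglyMeasurable_finLpNorm p fun i => (hh i).1)
    (ae_of_all _ fun x => ?_)
  rw [Real.norm_of_nonneg (finLpNorm_nonneg _ _), Finset.sum_apply]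
  exact (finLpNorm_le_card_rpow_mul_sum_abs hp _).trans (le_abs_self _)

lemma lintegral_ofReal_mul_le_eLpNorm_mul_eLpNorm {p q : ℝ≥0∞} [p.HolderConjugate q]
    {A B : α → ℝ} (hA : AEStronglyMeasurable A μ) (hB : AEStronglyMeasurable B μ) :
    ∫⁻ x, ENNReal.ofReal (A x * B x) ∂μ ≤ eLpNorm A p μ * eLpNorm B q μ :=
  calc ∫⁻ x, ENNReal.ofReal (A x * B x) ∂μ ≤ ∫⁻ x, ‖A x * B x‖ₑ ∂μ :=
        lintegral_mono fun _ => Real.ofReal_le_enorm _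
    _ = eLpNorm (A • B) 1 μ := eLpNorm_one_eq_lintegral_enorm.symm
    _ ≤ eLpNorm A p μ * eLpNorm B q μ := eLpNorm_smul_le_mul_eLpNorm hB hA

lemma ENNReal.le_of_rpow_le_mul_rpow_sub_one {x c : ℝ≥0∞} {t : ℝ} (hx : x ≠ ∞)
    (h : x ^ t ≤ c * x ^ (t - 1)) : x ≤ c := by
  rcases eq_or_ne x 0 with rfl | hx0
  · exact zero_le
  have hsplit : x ^ t = x * x ^ (t - 1) := by
    conv_lhs => rw [← add_sub_cancel 1 t, ENNReal.rpow_add _ _ hx0 hx, ENNReal.rpow_one]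
  rw [hsplit] at h
  exact (ENNReal.mul_le_mul_iff_left (by simp [hx0, hx]) (by simp [hx0, hx])).1 h

lemma lintegral_ofReal_rpow_eq_eLpNorm_rpow {v : ℝ≥0∞} (hv0 : v ≠ 0) (hv : v ≠ ∞) {F : α → ℝ}
    (hF : ∀ x, 0 ≤ F x) :
    ∫⁻ x, ENNReal.ofReal (F x ^ v.toReal) ∂μ = eLpNorm F v μ ^ v.toReal := by
  rw [eLpNorm_eq_eLpNorm' hv0 hv, ← lintegral_rpow_enorm_eq_rpow_eLpNorm' (toReal_pos hv0 hv)]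
  congr with x
  rw [Real.enorm_eq_ofReal (hF x), ofReal_rpow_of_nonneg (hF x) toReal_nonneg]

lemma eLpNorm_rpow_sub_one {v v' : ℝ≥0∞} [v.HolderConjugate v'] (hv1 : 1 < v) (hv : v ≠ ∞)
    {F : α → ℝ} (hF : ∀ x, 0 ≤ F x) :
    eLpNorm (fun x => F x ^ (v.toReal - 1)) v' μ = eLpNorm F v μ ^ (v.toReal - 1) := by
  have hv' : v' ≠ ∞ := (HolderConjugate.ne_top_iff_ne_one v' v).2 hv1.ne'
  have hvr := HolderConjugate.toReal_of_ne_top hv hv'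
  have := eLpNorm_norm_rpow F hvr.sub_one_pos (p := v') (μ := μ)
  simp only [Real.norm_of_nonneg (hF _)] at this
  rw [this, ← ofReal_toReal hv', ← ofReal_mul toReal_nonneg, mul_comm, hvr.sub_one_mul_conj,
    ofReal_toReal hv]

lemma MeasureTheory.MemLp.rpow_sub_one {v v' : ℝ≥0∞} [v.HolderConjugate v'] (hv1 : 1 < v)
    (hv : v ≠ ∞) {F : α → ℝ} (hF : MemLp F v μ) (hF0 : ∀ x, 0 ≤ F x) :
    MemLp (fun x => F x ^ (v.toReal - 1)) v' μ := by
  refine ⟨(hF.1.aemeasurable.pow_const _).aestronglyMeasurable, ?_⟩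
  rw [eLpNorm_rpow_sub_one hv1 hv hF0]
  exact rpow_lt_top_of_nonneg (sub_nonneg.2 (by simpa using toReal_mono hv hv1.le))
    hF.eLpNorm_ne_top

lemma eLpNorm_le_of_lintegral_rpow_le {v v' : ℝ≥0∞} [v.HolderConjugate v'] (hv1 : 1 < v)
    (hv : v ≠ ∞) {F : α → ℝ} (hF : ∀ x, 0 ≤ F x) (hFv : eLpNorm F v μ ≠ ∞) {C : ℝ≥0∞}
    (h : ∫⁻ x, ENNReal.ofReal (F x ^ v.toReal) ∂μ ≤
      C * eLpNorm (fun x => F x ^ (v.toReal - 1)) v' μ) :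
    eLpNorm F v μ ≤ C := by
  rw [lintegral_ofReal_rpow_eq_eLpNorm_rpow (zero_lt_one.trans hv1).ne' hv hF,
    eLpNorm_rpow_sub_one hv1 hv hF] at h
  exact ENNReal.le_of_rpow_le_mul_rpow_sub_one hFv h

lemma exists_extremal_family {ι : Type*} [Fintype ι] {p s r : ℝ} (hpsr : p.HolderTriple s r)
    {v v' : ℝ≥0∞} [v.HolderConjugate v'] (hv1 : 1 < v) (hv : v ≠ ∞) {h : ι → α → ℝ}
    (hh : ∀ i, MemLp (h i) v μ) :
    ∃ g : ι → α → ℝ, (∀ i, MemLp (g i) v' μ) ∧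
      (∀ x, finLpNorm r (fun i => h i x * g i x) = finLpNorm p (fun i => h i x) ^ v.toReal) ∧
      (∀ x, finLpNorm s (fun i => g i x) = finLpNorm p (fun i => h i x) ^ (v.toReal - 1)) := by
  set F : α → ℝ := fun x => finLpNorm p (fun i => h i x)
  have hF0 : ∀ x, 0 ≤ F x := fun x => finLpNorm_nonneg _ _
  have hFv : MemLp F v μ := memLp_finLpNorm hpsr.pos hh
  have hvr : 1 < v.toReal := by simpa using (toReal_lt_toReal one_ne_top hv).2 hv1
  have hexp := hpsr.div_eq_one_add_div
  have hgs : ∀ x, finLpNorm s (fun i => |h i x| ^ (p / s) * F x ^ (v.toReal - p / r)) =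
      F x ^ (v.toReal - 1) := fun x => by
    rw [finLpNorm_rpow_div_mul hpsr.ne_zero hpsr.symm.pos (Real.rpow_nonneg (hF0 x) _),
      ← Real.rpow_add' (hF0 x) (by linarith)]
    congr 1
    linarith
  refine ⟨fun i x => |h i x| ^ (p / s) * F x ^ (v.toReal - p / r), fun i => ?_, fun x => ?_, hgs⟩
  · refine MemLp.of_le (hFv.rpow_sub_one hv1 hv hF0)
      ((((hh i).1.aemeasurable.abs.pow_const _).mul
        (hFv.1.aemeasurable.pow_const _)).aestronglyMeasurable) (ae_of_all _ fun x => ?_)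
    rw [Real.norm_eq_abs, Real.norm_of_nonneg (Real.rpow_nonneg (hF0 x) _), ← hgs x]
    exact abs_le_finLpNorm hpsr.symm.pos
      (fun i => |h i x| ^ (p / s) * F x ^ (v.toReal - p / r)) i
  · rw [finLpNorm_mul_rpow_div_mul hpsr (Real.rpow_nonneg (hF0 x) _),
      ← Real.rpow_add' (hF0 x) (by linarith), add_sub_cancel]

end Measure

section Regularity

variable {Ω Ω' : Type*} [MeasurableSpace Ω] [MeasurableSpace Ω'] {μ : Measure Ω}
  {ν : Measure Ω'} {u v v' : ℝ≥0∞} {p q r s K : ℝ}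

lemma IsPQRegular.lintegral_le [v.HolderConjugate v'] {T : Lp ℝ u μ → Lp ℝ v ν}
    (hT : IsPQRegular T p q K) (hpsr : p.HolderTriple s r) (n : ℕ) (f : Fin n → Lp ℝ u μ)
    (g : Fin n → Lp ℝ v' ν) :
    ∫⁻ ω', ENNReal.ofReal ((∑ i, |T (f i) ω' * g i ω'| ^ r) ^ (1 / r)) ∂ν ≤
      ENNReal.ofReal K * eLpNorm (fun ω => (∑ i, |f i ω| ^ q) ^ (1 / q)) u μ *
        eLpNorm (fun ω' => (∑ i, |g i ω'| ^ s) ^ (1 / s)) v' ν :=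
  calc ∫⁻ ω', ENNReal.ofReal (finLpNorm r fun i => T (f i) ω' * g i ω') ∂ν
      ≤ ∫⁻ ω', ENNReal.ofReal
          (finLpNorm p (fun i => T (f i) ω') * finLpNorm s fun i => g i ω') ∂ν :=
        lintegral_mono fun _ => ENNReal.ofReal_le_ofReal (finLpNorm_mul_le hpsr _ _)
    _ ≤ eLpNorm (fun ω' => finLpNorm p fun i => T (f i) ω') v ν *
          eLpNorm (fun ω' => finLpNorm s fun i => g i ω') v' ν :=
        lintegral_ofReal_mul_le_eLpNorm_mul_eLpNorm
          (aestronglyMeasurable_finLpNorm p fun i => (Lp.memLp (T (f i))).1)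
          (aestronglyMeasurable_finLpNorm s fun i => (Lp.memLp (g i)).1)
    _ ≤ _ := mul_le_mul_left (hT n f) _

lemma isPQRegular_of_lintegral_le [v.HolderConjugate v'] (hv1 : 1 < v) (hv : v ≠ ∞)
    (hpsr : p.HolderTriple s r) {T : Lp ℝ u μ → Lp ℝ v ν}
    (hT : ∀ (n : ℕ) (f : Fin n → Lp ℝ u μ) (g : Fin n → Lp ℝ v' ν),
      ∫⁻ ω', ENNReal.ofReal ((∑ i, |T (f i) ω' * g i ω'| ^ r) ^ (1 / r)) ∂ν ≤
        ENNReal.ofReal K * eLpNorm (fun ω => (∑ i, |f i ω| ^ q) ^ (1 / q)) u μ *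
          eLpNorm (fun ω' => (∑ i, |g i ω'| ^ s) ^ (1 / s)) v' ν) :
    IsPQRegular T p q K := by
  intro n f
  obtain ⟨g, hg, hTg, hgs⟩ :=
    exists_extremal_family (v' := v') hpsr hv1 hv fun i => Lp.memLp (T (f i))
  have hae : ∀ᵐ ω' ∂ν, ∀ i, (hg i).toLp (g i) ω' = g i ω' :=
    ae_all_iff.2 fun i => (hg i).coeFn_toLp
  refine eLpNorm_le_of_lintegral_rpow_le (v' := v') hv1 hv (fun _ => finLpNorm_nonneg _ _)
    (memLp_finLpNorm hpsr.pos fun i => Lp.memLp (T (f i))).eLpNorm_ne_top ?_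
  calc ∫⁻ ω', ENNReal.ofReal ((finLpNorm p fun i => T (f i) ω') ^ v.toReal) ∂ν
      = ∫⁻ ω', ENNReal.ofReal
          (finLpNorm r fun i => T (f i) ω' * (hg i).toLp (g i) ω') ∂ν :=
        lintegral_congr_ae (hae.mono fun ω' hω' => by simp only [hω', hTg])
    _ ≤ _ := hT n f fun i => (hg i).toLp (g i)
    _ = _ := by
        congr 1
        exact eLpNorm_congr_ae (hae.mono fun ω' hω' => by simp only [hω']; exact hgs ω')

end Regularity

theorem stmt8_general {Ω Ω' : Type*} [MeasurableSpace Ω] [MeasurableSpace Ω']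
    (μ : Measure Ω) (ν : Measure Ω')
    (u v v' : ℝ≥0∞) [Fact (1 ≤ u)] [Fact (1 ≤ v)]
    (hv1 : 1 < v) (hv_top : v ≠ ∞) (hvv' : 1 / v + 1 / v' = 1)
    (r p s q : ℝ) (hr : 1 ≤ r) (hrp : r ≤ p) (hrs : r ≤ s)
    (hc : 1 / r = 1 / p + 1 / s)
    (T : Lp ℝ u μ →L[ℝ] Lp ℝ v ν) (K : ℝ) :
    IsPQRegular (⇑T) p q K ↔
      ∀ (n : ℕ) (f : Fin n → Lp ℝ u μ) (g : Fin n → Lp ℝ v' ν),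
        ∫⁻ ω', ENNReal.ofReal ((∑ i, |T (f i) ω' * g i ω'| ^ r) ^ (1 / r)) ∂ν ≤
          ENNReal.ofReal K * eLpNorm (fun ω => (∑ i, |f i ω| ^ q) ^ (1 / q)) u μ *
            eLpNorm (fun ω' => (∑ i, |g i ω'| ^ s) ^ (1 / s)) v' ν := by
  have hr0 : 0 < r := zero_lt_one.trans_le hr
  have hpsr : p.HolderTriple s r :=
    ⟨by simpa only [one_div] using hc.symm, hr0.trans_le hrp, hr0.trans_le hrs⟩
  have : v.HolderConjugate v' := ⟨by simpa only [one_div, inv_one] using hvv'⟩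
  exact ⟨fun hT => hT.lintegral_le hpsr, isPQRegular_of_lintegral_le hv1 hv_top hpsr⟩

/-- A bounded operator `T : L^u(μ) → L^v(ν)` is `(p,q)`-regular with constant
`K` iff the associated bilinear inequality holds:
`∫ (∑ᵢ |(T fᵢ) gᵢ|^r)^(1/r) dν ≤ K ‖(∑ᵢ |fᵢ|^q)^(1/q)‖_u ‖(∑ᵢ |gᵢ|^s)^(1/s)‖_{v'}`. -/
theorem stmt8 {Ω Ω' : Type*} [MeasurableSpace Ω] [MeasurableSpace Ω']
    (μ : Measure Ω) (ν : Measure Ω') [SigmaFinite μ] [SigmaFinite ν]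
    (u v v' : ℝ≥0∞) [Fact (1 ≤ u)] [Fact (1 ≤ v)]
    (hu_top : u ≠ ∞) (hv1 : 1 < v) (hv_top : v ≠ ∞) (hvv' : 1 / v + 1 / v' = 1)
    (r p s q : ℝ) (hr : 1 ≤ r) (hrp : r ≤ p) (hrs : r ≤ s)
    (hc : 1 / r = 1 / p + 1 / s) (hq : 1 ≤ q) (hqp : q ≤ p)
    (T : Lp ℝ u μ →L[ℝ] Lp ℝ v ν) (K : ℝ) (hK : 0 ≤ K) :
    IsPQRegular (⇑T) p q K ↔
      ∀ (n : ℕ) (f : Fin n → Lp ℝ u μ) (g : Fin n → Lp ℝ v' ν),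
        ∫⁻ ω', ENNReal.ofReal ((∑ i, |T (f i) ω' * g i ω'| ^ r) ^ (1 / r)) ∂ν ≤
          ENNReal.ofReal K * eLpNorm (fun ω => (∑ i, |f i ω| ^ q) ^ (1 / q)) u μ *
            eLpNorm (fun ω' => (∑ i, |g i ω'| ^ s) ^ (1 / s)) v' ν :=
  stmt8_general μ ν u v v' hv1 hv_top hvv' r p s q hr hrp hrs hc T K
end

section
/- Let $(\Omega,\Sigma,\mu)$ and $(\Omega',\Sigma',\nu)$ be measure spaces, $1 \le u, v \le \infty$, and $1 \le q \le p < \infty$ with $1 < p$ and conjugate exponent $p'$ ($1/p + 1/p' = 1$). Then for all finite families $f_1,\dots,f_n \in L^u(\mu)$, $g_1,\dots,g_n \in L^v(\nu)$ and all continuous linear functionals $x^* \in (L^u(\mu))^*$, $y^* \in (L^v(\nu))^*$ with $\|x^*\| \le 1$ and $\|y^*\| \le 1$, one has $\big|\sum_{i=1}^n x^*(f_i)\, y^*(g_i)\big| \le \big\|(\sum_{i=1}^n |f_i|^q)^{1/q}\big\|_{L^u(\mu)} \cdot \big\|(\sum_{i=1}^n |g_i|^{p'})^{1/p'}\big\|_{L^v(\nu)}$.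 -/
/-!
Writing `∑ᵢ x*(fᵢ) y*(gᵢ) = x*(∑ᵢ y*(gᵢ) fᵢ)`, pointwise Hölder in `i` bounds the `L^u`-norm of
`∑ᵢ y*(gᵢ) fᵢ` by `‖(y*(gᵢ))ᵢ‖_{ℓ^{p'}} ‖(∑ᵢ |fᵢ|^p)^{1/p}‖_u`, and since
`‖·‖_{ℓ^p} ≤ ‖·‖_{ℓ^q}` for `q ≤ p` the exponent `p` may be replaced by `q`. Finally
`‖(y*(gᵢ))ᵢ‖_{ℓ^{p'}}` is computed by testing against `c ∈ ℓ^p`: `∑ᵢ cᵢ y*(gᵢ) = y*(∑ᵢ cᵢ gᵢ)`,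
and the same pointwise Hölder bound, now in `L^v`, gives `‖c‖_{ℓ^p} ‖(∑ᵢ |gᵢ|^{p'})^{1/p'}‖_v`.
-/

open MeasureTheory ENNReal Finset

namespace Real

variable {ι : Type*}

theorem sum_rpow_le_rpow_sum (s : Finset ι) {b : ι → ℝ} (hb : ∀ i ∈ s, 0 ≤ b i) {r : ℝ}
    (hr : 1 ≤ r) : ∑ i ∈ s, b i ^ r ≤ (∑ i ∈ s, b i) ^ r := by
  have hB : 0 ≤ ∑ i ∈ s, b i := sum_nonneg hb
  have rpow_eq_mul : ∀ x : ℝ, 0 ≤ x → x ^ r = x * x ^ (r - 1) := fun x hx => by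
    rw [← rpow_one_add' hx (by linarith), add_sub_cancel]
  calc ∑ i ∈ s, b i ^ r = ∑ i ∈ s, b i * b i ^ (r - 1) :=
        sum_congr rfl fun i hi => rpow_eq_mul _ (hb i hi)
    _ ≤ ∑ i ∈ s, b i * (∑ j ∈ s, b j) ^ (r - 1) := by
        refine sum_le_sum fun i hi => mul_le_mul_of_nonneg_left ?_ (hb i hi)
        exact rpow_le_rpow (hb i hi) (single_le_sum hb hi) (by linarith)
    _ = (∑ i ∈ s, b i) ^ r := by rw [← sum_mul, ← rpow_eq_mul _ hB]

theorem rpow_sum_rpow_le (s : Finset ι) {a : ι → ℝ} (ha : ∀ i ∈ s, 0 ≤ a i) {p q : ℝ}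
    (hq : 0 < q) (hqp : q ≤ p) :
    (∑ i ∈ s, a i ^ p) ^ (1 / p) ≤ (∑ i ∈ s, a i ^ q) ^ (1 / q) := by
  have hp : 0 < p := hq.trans_le hqp
  have ha_q : ∀ i ∈ s, 0 ≤ a i ^ q := fun i hi => rpow_nonneg (ha i hi) q
  calc (∑ i ∈ s, a i ^ p) ^ (1 / p) = (∑ i ∈ s, (a i ^ q) ^ (p / q)) ^ (1 / p) := by
        congr 1
        refine sum_congr rfl fun i hi => ?_
        rw [← rpow_mul (ha i hi), mul_div_cancel₀ _ hq.ne']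
    _ ≤ ((∑ i ∈ s, a i ^ q) ^ (p / q)) ^ (1 / p) := by
        gcongr
        · exact sum_nonneg fun i hi => rpow_nonneg (ha_q i hi) _
        · exact sum_rpow_le_rpow_sum s ha_q ((one_le_div hq).2 hqp)
    _ = (∑ i ∈ s, a i ^ q) ^ (1 / q) := by
        rw [← rpow_mul (sum_nonneg ha_q)]
        field_simp

theorem sign_mul_abs_rpow_sub_one_mul_self {b : ℝ} (hb : 0 < b) (x : ℝ) :
    (SignType.sign x * |x| ^ (b - 1)) * x = |x| ^ b := by
  rw [mul_right_comm, sign_mul_self, ← rpow_one_add' (abs_nonneg x) (by linarith),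
    add_sub_cancel]

theorem abs_sign_mul_abs_rpow_sub_one_rpow {a b : ℝ} (hab : a.HolderConjugate b) (x : ℝ) :
    |SignType.sign x * |x| ^ (b - 1)| ^ a = |x| ^ b := by
  rcases eq_or_ne x 0 with rfl | hx
  · simp [zero_rpow hab.pos.ne', zero_rpow hab.symm.pos.ne']
  · have abs_sign : |(SignType.sign x : ℝ)| = 1 := by
      rcases hx.lt_or_gt with hx | hx
      · simp [_root_.sign_neg hx]
      · simp [_root_.sign_pos hx]
    rw [abs_mul, abs_sign, one_mul, abs_of_nonneg (rpow_nonneg (abs_nonneg x) _),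
      ← rpow_mul (abs_nonneg x), hab.symm.sub_one_mul_conj]

/-- Finite-dimensional `ℓ^a`–`ℓ^b` duality: the norming vector is `cᵢ = sign tᵢ |tᵢ|^(b-1)`,
for which `∑ᵢ cᵢ tᵢ = ∑ᵢ |tᵢ|^b = ∑ᵢ |cᵢ|^a`. -/
theorem ofReal_rpow_sum_abs_rpow_le_of_forall [Fintype ι] {a b : ℝ} (hab : a.HolderConjugate b)
    (t : ι → ℝ) {M : ℝ≥0∞}
    (h : ∀ c : ι → ℝ,
      ENNReal.ofReal (∑ i, c i * t i) ≤ ENNReal.ofReal ((∑ i, |c i| ^ a) ^ (1 / a)) * M) :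
    ENNReal.ofReal ((∑ i, |t i| ^ b) ^ (1 / b)) ≤ M := by
  have hc := h fun i => SignType.sign (t i) * |t i| ^ (b - 1)
  simp only [sign_mul_abs_rpow_sub_one_mul_self hab.symm.pos,
    abs_sign_mul_abs_rpow_sub_one_rpow hab] at hc
  set S := ∑ i, |t i| ^ b
  have hS : 0 ≤ S := sum_nonneg fun i _ => rpow_nonneg (abs_nonneg _) b
  rcases hS.eq_or_lt with hS0 | hS0
  · rw [← hS0, zero_rpow hab.symm.one_div_ne_zero, ofReal_zero]
    exact zero_le
  have hsplit : ENNReal.ofReal S =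
      ENNReal.ofReal (S ^ (1 / a)) * ENNReal.ofReal (S ^ (1 / b)) := by
    rw [← ofReal_mul (rpow_nonneg hS _), ← rpow_add hS0, hab.one_div_add_one_div, div_one,
      rpow_one]
  rw [hsplit] at hc
  exact (ENNReal.mul_le_mul_iff_right (by simpa using rpow_pos_of_pos hS0 (1 / a))
    ofReal_ne_top).1 hc

end Real

theorem MeasureTheory.eLpNorm_rpow_sum_abs_rpow_le {ι Ω : Type*} [Fintype ι] [MeasurableSpace Ω]
    {μ : Measure Ω} {u : ℝ≥0∞} (h : ι → Ω → ℝ) {p q : ℝ} (hq : 0 < q) (hqp : q ≤ p) :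
    eLpNorm (fun ω => (∑ i, |h i ω| ^ p) ^ (1 / p)) u μ ≤
      eLpNorm (fun ω => (∑ i, |h i ω| ^ q) ^ (1 / q)) u μ := by
  refine eLpNorm_mono_real fun ω => ?_
  rw [Real.norm_of_nonneg (Real.rpow_nonneg (sum_nonneg fun i _ =>
    Real.rpow_nonneg (abs_nonneg _) p) _)]
  exact Real.rpow_sum_rpow_le univ (fun i _ => abs_nonneg _) hq hqp

namespace MeasureTheory.Lp

variable {ι Ω : Type*} [Fintype ι] [MeasurableSpace Ω] {μ : Measure Ω} {u : ℝ≥0∞} [Fact (1 ≤ u)]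

theorem enorm_sum_smul_le {a b : ℝ} (hab : a.HolderConjugate b) (c : ι → ℝ)
    (h : ι → Lp ℝ u μ) :
    ‖∑ i, c i • h i‖ₑ ≤ ENNReal.ofReal ((∑ i, |c i| ^ a) ^ (1 / a)) *
      eLpNorm (fun ω => (∑ i, |h i ω| ^ b) ^ (1 / b)) u μ := by
  rw [enorm_def]
  refine eLpNorm_le_mul_eLpNorm_of_ae_le_mul ?_ u
  have smul_ae : ∀ᵐ ω ∂μ, ∀ i, (c i • h i) ω = c i * h i ω :=
    ae_all_iff.2 fun i => coeFn_smul (c i) (h i)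
  filter_upwards [coeFn_fun_finsetSum univ (fun i => c i • h i), smul_ae] with ω hsum hsmul
  rw [hsum, Real.norm_of_nonneg (Real.rpow_nonneg (sum_nonneg fun i _ =>
    Real.rpow_nonneg (abs_nonneg _) b) _), Real.norm_eq_abs]
  simp only [hsmul]
  calc |∑ i, c i * h i ω| ≤ ∑ i, |c i| * |h i ω| := by
        simpa only [abs_mul] using abs_sum_le_sum_abs (fun i => c i * h i ω) univ
    _ ≤ _ := Real.inner_le_Lp_mul_Lq_of_nonneg univ hab (fun i _ => abs_nonneg _)
        (fun i _ => abs_nonneg _)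

theorem ofReal_rpow_sum_abs_apply_rpow_le {a b : ℝ} (hab : a.HolderConjugate b)
    (y : Lp ℝ u μ →L[ℝ] ℝ) (g : ι → Lp ℝ u μ) :
    ENNReal.ofReal ((∑ i, |y (g i)| ^ b) ^ (1 / b)) ≤
      ‖y‖ₑ * eLpNorm (fun ω => (∑ i, |g i ω| ^ b) ^ (1 / b)) u μ := by
  refine Real.ofReal_rpow_sum_abs_rpow_le_of_forall hab _ fun c => ?_
  calc ENNReal.ofReal (∑ i, c i * y (g i)) ≤ ‖y (∑ i, c i • g i)‖ₑ := by
        simpa [map_sum, Real.enorm_eq_ofReal_abs] using ofReal_le_ofReal (le_abs_self _)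
    _ ≤ ‖y‖ₑ * ‖∑ i, c i • g i‖ₑ := y.le_opENorm _
    _ ≤ ‖y‖ₑ * (ENNReal.ofReal ((∑ i, |c i| ^ a) ^ (1 / a)) *
          eLpNorm (fun ω => (∑ i, |g i ω| ^ b) ^ (1 / b)) u μ) := by
        gcongr
        exact enorm_sum_smul_le hab c g
    _ = _ := mul_left_comm _ _ _

end MeasureTheory.Lp

/-- The injective tensor norm is dominated by the lattice tensor quantity
`φ_{p,q}` on `L^u(μ) ⊗ L^v(ν)`: for norm-one functionals `x*`, `y*`,
`|∑ᵢ x*(fᵢ) y*(gᵢ)| ≤ ‖(∑ᵢ |fᵢ|^q)^(1/q)‖_u ‖(∑ᵢ |gᵢ|^{p'})^(1/p')‖_v`. -/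
theorem stmt9 {Ω Ω' : Type*} [MeasurableSpace Ω] [MeasurableSpace Ω']
    (μ : Measure Ω) (ν : Measure Ω') (u v : ℝ≥0∞) [Fact (1 ≤ u)] [Fact (1 ≤ v)]
    (p q p' : ℝ) (hq : 1 ≤ q) (hqp : q ≤ p) (hp : 1 < p)
    (hp' : 1 / p + 1 / p' = 1)
    (n : ℕ) (f : Fin n → Lp ℝ u μ) (g : Fin n → Lp ℝ v ν)
    (x : Lp ℝ u μ →L[ℝ] ℝ) (y : Lp ℝ v ν →L[ℝ] ℝ)
    (hx : ‖x‖ ≤ 1) (hy : ‖y‖ ≤ 1) :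
    ENNReal.ofReal |∑ i, x (f i) * y (g i)| ≤
      eLpNorm (fun ω => (∑ i, |f i ω| ^ q) ^ (1 / q)) u μ *
        eLpNorm (fun ω' => (∑ i, |g i ω'| ^ p') ^ (1 / p')) v ν := by
  have hpp' : p.HolderConjugate p' := Real.holderConjugate_iff.2 ⟨hp, by simpa using hp'⟩
  have hxe : ‖x‖ₑ ≤ 1 := by simpa [← ofReal_norm] using hx
  have hye : ‖y‖ₑ ≤ 1 := by simpa [← ofReal_norm] using hy
  have hsum : ∑ i, x (f i) * y (g i) = x (∑ i, y (g i) • f i) := by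
    simp [map_sum, mul_comm]
  calc ENNReal.ofReal |∑ i, x (f i) * y (g i)| = ‖x (∑ i, y (g i) • f i)‖ₑ := by
        rw [hsum, Real.enorm_eq_ofReal_abs]
    _ ≤ ‖∑ i, y (g i) • f i‖ₑ := (x.le_opENorm _).trans (mul_le_of_le_one_left' hxe)
    _ ≤ ENNReal.ofReal ((∑ i, |y (g i)| ^ p') ^ (1 / p')) *
          eLpNorm (fun ω => (∑ i, |f i ω| ^ p) ^ (1 / p)) u μ :=
        Lp.enorm_sum_smul_le hpp'.symm _ f
    _ ≤ eLpNorm (fun ω' => (∑ i, |g i ω'| ^ p') ^ (1 / p')) v ν *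
          eLpNorm (fun ω => (∑ i, |f i ω| ^ q) ^ (1 / q)) u μ := by
        gcongr ?_ * ?_
        · exact (Lp.ofReal_rpow_sum_abs_apply_rpow_le hpp' y g).trans
            (mul_le_of_le_one_left' hye)
        · exact eLpNorm_rpow_sum_abs_rpow_le (fun i => f i) (by linarith) hqp
    _ = _ := mul_comm _ _
end

section
/- Let $(\Omega,\Sigma,\mu)$ and $(\Omega',\Sigma',\nu)$ be $\sigma$-finite measure spaces and let $1 \le q \le r \le p < \infty$. Then there is a constant $C$ depending only on $p$, $q$, $r$ such that every bounded linear operator $T : L^r(\mu) \to L^r(\nu)$ is $(p,q)$-regular with constant $C\|T\|$. -/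
open MeasureTheory ENNReal

/-
Pointwise, `(∑ |xᵢ|^s)^(1/s)` decreases in `s`, so the `ℓ^p`-expression is dominated by the
`ℓ^r`-expression and the `ℓ^r`-expression by the `ℓ^q`-expression. For the middle exponent `r`,
raising to the power `r` removes the root and the integral splits over the sum:
`‖(∑ |gᵢ|^r)^(1/r)‖_{L^r} = (∑ ‖gᵢ‖_{L^r}^r)^(1/r)`, so `T` acts termwise at cost `‖T‖` each.
Hence the constant `C = 1` works.
-/

namespace ENNReal

theorem rpow_sum_rpow_le_s13 {ι : Type*} (s : Finset ι) (x : ι → ℝ≥0∞) {a b : ℝ}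
    (ha : 0 < a) (hab : a ≤ b) :
    (∑ i ∈ s, x i ^ b) ^ (1 / b) ≤ (∑ i ∈ s, x i ^ a) ^ (1 / a) := by
  have hb : 0 < b := ha.trans_le hab
  induction s using Finset.cons_induction with
  | empty => simp [zero_rpow_of_pos, ha, hb]
  | cons j s _ ih =>
    rw [Finset.sum_cons, Finset.sum_cons]
    calc (x j ^ b + ∑ i ∈ s, x i ^ b) ^ (1 / b)
        = (x j ^ b + ((∑ i ∈ s, x i ^ b) ^ (1 / b)) ^ b) ^ (1 / b) := by
          rw [one_div, rpow_inv_rpow hb.ne']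
      _ ≤ (x j ^ a + ((∑ i ∈ s, x i ^ b) ^ (1 / b)) ^ a) ^ (1 / a) :=
          rpow_add_rpow_le _ _ ha hab
      _ ≤ (x j ^ a + ((∑ i ∈ s, x i ^ a) ^ (1 / a)) ^ a) ^ (1 / a) := by gcongr
      _ = (x j ^ a + ∑ i ∈ s, x i ^ a) ^ (1 / a) := by
          rw [one_div a, rpow_inv_rpow ha.ne']

theorem rpow_sum_mul_rpow {ι : Type*} (s : Finset ι) (c : ℝ≥0∞) (x : ι → ℝ≥0∞) {r : ℝ}
    (hr : 0 < r) :
    (∑ i ∈ s, (c * x i) ^ r) ^ (1 / r) = c * (∑ i ∈ s, x i ^ r) ^ (1 / r) := by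
  simp_rw [mul_rpow_of_nonneg _ _ hr.le, ← Finset.mul_sum,
    mul_rpow_of_nonneg _ _ (one_div_pos.2 hr).le, one_div, rpow_rpow_inv hr.ne']

end ENNReal

theorem Real.enorm_rpow_sum_abs_rpow {ι : Type*} (s : Finset ι) (x : ι → ℝ) {r : ℝ}
    (hr : 0 < r) :
    ‖(∑ i ∈ s, |x i| ^ r) ^ (1 / r)‖ₑ = (∑ i ∈ s, ‖x i‖ₑ ^ r) ^ (1 / r) := by
  have hterm : ∀ i ∈ s, 0 ≤ |x i| ^ r := fun i _ => Real.rpow_nonneg (abs_nonneg _) _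
  have hsum : 0 ≤ ∑ i ∈ s, |x i| ^ r := Finset.sum_nonneg hterm
  rw [Real.enorm_eq_ofReal_abs, abs_of_nonneg (Real.rpow_nonneg hsum _),
    ← ofReal_rpow_of_nonneg hsum (one_div_pos.2 hr).le, ofReal_sum_of_nonneg hterm]
  congr 1
  refine Finset.sum_congr rfl fun i _ => ?_
  rw [Real.enorm_eq_ofReal_abs, ofReal_rpow_of_nonneg (abs_nonneg _) hr.le]

namespace MeasureTheory

variable {α ι : Type*} [MeasurableSpace α] {μ : Measure α} [Fintype ι]

theorem eLpNorm_rpow_sum_abs_rpow_le_s13 (g : ι → α → ℝ) (s : ℝ≥0∞) {a b : ℝ}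
    (ha : 0 < a) (hab : a ≤ b) :
    eLpNorm (fun x => (∑ i, |g i x| ^ b) ^ (1 / b)) s μ ≤
      eLpNorm (fun x => (∑ i, |g i x| ^ a) ^ (1 / a)) s μ := by
  refine eLpNorm_mono_enorm fun x => ?_
  rw [Real.enorm_rpow_sum_abs_rpow _ _ (ha.trans_le hab), Real.enorm_rpow_sum_abs_rpow _ _ ha]
  exact rpow_sum_rpow_le_s13 _ _ ha hab

theorem eLpNorm_rpow_sum_abs_rpow {g : ι → α → ℝ} (hg : ∀ i, AEStronglyMeasurable (g i) μ)
    {r : ℝ} (hr : 0 < r) :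
    eLpNorm (fun x => (∑ i, |g i x| ^ r) ^ (1 / r)) (ENNReal.ofReal r) μ =
      (∑ i, eLpNorm (g i) (ENNReal.ofReal r) μ ^ r) ^ (1 / r) := by
  have hr₀ : ENNReal.ofReal r ≠ 0 := by simpa using hr
  simp_rw [eLpNorm_eq_eLpNorm' hr₀ ofReal_ne_top, toReal_ofReal hr.le,
    eLpNorm'_eq_lintegral_enorm, Real.enorm_rpow_sum_abs_rpow _ _ hr, one_div r,
    rpow_inv_rpow hr.ne']
  rw [lintegral_finsetSum' _ fun i _ => (hg i).enorm.pow_const r]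

end MeasureTheory

theorem ContinuousLinearMap.isPQRegular_norm {Ω Ω' : Type*} [MeasurableSpace Ω]
    [MeasurableSpace Ω'] {μ : Measure Ω} {ν : Measure Ω'} {p q r : ℝ} (hq : 0 < q)
    (hqr : q ≤ r) (hrp : r ≤ p) [Fact (1 ≤ ENNReal.ofReal r)]
    (T : Lp ℝ (ENNReal.ofReal r) μ →L[ℝ] Lp ℝ (ENNReal.ofReal r) ν) :
    IsPQRegular (⇑T) p q ‖T‖ := by
  intro n f
  have hr : 0 < r := hq.trans_le hqr
  calc eLpNorm (fun ω' => (∑ i, |T (f i) ω'| ^ p) ^ (1 / p)) (ENNReal.ofReal r) ν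
      ≤ eLpNorm (fun ω' => (∑ i, |T (f i) ω'| ^ r) ^ (1 / r)) (ENNReal.ofReal r) ν :=
        eLpNorm_rpow_sum_abs_rpow_le_s13 _ _ hr hrp
    _ = (∑ i, ‖T (f i)‖ₑ ^ r) ^ (1 / r) := by
        rw [eLpNorm_rpow_sum_abs_rpow (fun i => Lp.aestronglyMeasurable _) hr]
        simp only [Lp.enorm_def]
    _ ≤ (∑ i, (‖T‖ₑ * ‖f i‖ₑ) ^ r) ^ (1 / r) := by
        gcongr with i
        exact T.le_opENorm _
    _ = ENNReal.ofReal ‖T‖ *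
          eLpNorm (fun ω => (∑ i, |f i ω| ^ r) ^ (1 / r)) (ENNReal.ofReal r) μ := by
        rw [rpow_sum_mul_rpow _ _ _ hr, ofReal_norm,
          eLpNorm_rpow_sum_abs_rpow (fun i => Lp.aestronglyMeasurable _) hr]
        simp only [Lp.enorm_def]
    _ ≤ ENNReal.ofReal ‖T‖ *
          eLpNorm (fun ω => (∑ i, |f i ω| ^ q) ^ (1 / q)) (ENNReal.ofReal r) μ := by
        gcongr 1
        exact eLpNorm_rpow_sum_abs_rpow_le_s13 _ _ hq hqr

/-- For `1 ≤ q ≤ r ≤ p < ∞` there is a constant `C` depending only on the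
exponents such that every bounded operator `T : L^r(μ) → L^r(ν)` between
σ-finite Lebesgue spaces is `(p,q)`-regular with constant `C‖T‖`. -/
theorem stmt13 (p q r : ℝ) (hq : 1 ≤ q) (hqr : q ≤ r) (hrp : r ≤ p)
    [Fact (1 ≤ ENNReal.ofReal r)] :
    ∃ C : ℝ,
      ∀ (Ω : Type*) (Ω' : Type*) [MeasurableSpace Ω] [MeasurableSpace Ω']
        (μ : Measure Ω) (ν : Measure Ω') [SigmaFinite μ] [SigmaFinite ν]
        (T : Lp ℝ (ENNReal.ofReal r) μ →L[ℝ] Lp ℝ (ENNReal.ofReal r) ν),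
        IsPQRegular (⇑T) p q (C * ‖T‖) := by
  refine ⟨1, fun Ω Ω' _ _ μ ν _ _ T => ?_⟩
  rw [one_mul]
  exact T.isPQRegular_norm (zero_lt_one.trans_le hq) hqr hrp
end
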